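/- arXiv:1703.07979 — 8 statements merged into one kernel-verified Lean document; each statement's English description precedes it below -/
import Mathlib

section
/- Let f : ℝ → ℝ admit an entire complex extension with Taylor coefficients c_k = f^{(k)}(0)/k!, let m ≥ 1 be an integer and a > 0. Then the limit as ε → 0⁺ of [∫_ε^a f(x) x^{-m} dx − (Σ_{k=0}^{m-2} c_k/((m-k-1) ε^{m-k-1}) − c_{m-1} ln ε)] exists and equals c_{m-1} ln a − Σ_{k=0}^{m-2} c_k/((m-k-1) a^{m-k-1}) + Σ_{k=m}^{∞} c_k a^{k-m+1}/(k-m+1), where an empty sum is zero and the infinite series converges. -/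
/-! On the real line `f x = ∑ c k * x ^ k`, so for `x ≠ 0` the integrand `f x / x ^ m` splits into
the principal part `∑_{k < m} c k * x ^ (k - m)`, whose integral over `[ε, a]` is elementary and
produces exactly the subtracted divergent terms together with their values at `a`, and the tail
`∑ j, c (m + j) * x ^ j`. The tail is again a power series converging on all of `ℝ`, hence
continuous, so its integral over `[ε, a]` tends to its integral over `[0, a]`, which dominated
convergence evaluates termwise as the series `S`. -/

open Filter MeasureTheory Set

theorem hasSum_taylorSeries_of_entire_extension {F : ℂ → ℂ} {f : ℝ → ℝ} {c : ℕ → ℝ}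
    (hF : Differentiable ℂ F) (hFf : ∀ x : ℝ, F x = f x)
    (hc : ∀ k, (c k : ℂ) = iteratedDeriv k F 0 / k.factorial) (x : ℝ) :
    HasSum (fun k => c k * x ^ k) (f x) := by
  have H := Complex.hasSum_taylorSeries_of_entire hF 0 x
  rw [hFf] at H
  rw [← Complex.hasSum_ofReal]
  refine H.congr_fun fun k => ?_
  push_cast
  rw [hc k, smul_eq_mul, smul_eq_mul, sub_zero]
  ring

section PowerSeries

variable {c : ℕ → ℝ}

theorem norm_mul_pow_le_of_abs_le {x y : ℝ} (h : |x| ≤ |y|) (k : ℕ) :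
    ‖c k * x ^ k‖ ≤ ‖c k * y ^ k‖ := by
  rw [norm_mul, norm_mul, norm_pow, norm_pow, Real.norm_eq_abs x, Real.norm_eq_abs y]
  gcongr

theorem summable_norm_mul_pow_of_forall_summable
    (hs : ∀ x : ℝ, Summable fun k => c k * x ^ k) (x : ℝ) :
    Summable fun k => ‖c k * x ^ k‖ := by
  set r := |x| + 1
  have hr : 0 < r := by positivity
  have hq : |x| / r < 1 := (div_lt_one hr).2 (lt_add_one _)
  -- the terms at the larger radius `r` are bounded, giving a geometric majorant at `x`
  obtain ⟨C, hC⟩ := (hs r).tendsto_atTop_zero.norm.bddAbove_range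
  refine .of_nonneg_of_le (fun _ => norm_nonneg _) (fun k => ?_)
    ((summable_geometric_of_lt_one (by positivity) hq).mul_left C)
  calc ‖c k * x ^ k‖ = ‖c k * r ^ k‖ * (|x| / r) ^ k := by
        rw [norm_mul, norm_mul, norm_pow, norm_pow, Real.norm_of_nonneg hr.le,
          Real.norm_eq_abs x, div_pow, mul_assoc, mul_div_cancel₀ _ (pow_ne_zero _ hr.ne')]
    _ ≤ C * (|x| / r) ^ k := by gcongr; exact hC ⟨k, rfl⟩

theorem summable_norm_mul_pow_shift (hs : ∀ x : ℝ, Summable fun k => ‖c k * x ^ k‖)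
    (N : ℕ) (x : ℝ) : Summable fun j => ‖c (N + j) * x ^ j‖ := by
  have hr : 1 ≤ |x| + 1 := by simp
  refine .of_nonneg_of_le (fun _ => norm_nonneg _) (fun j => ?_)
    ((summable_nat_add_iff N).2 (hs (|x| + 1)))
  rw [add_comm N j, norm_mul, norm_mul, norm_pow, norm_pow, Real.norm_eq_abs x,
    Real.norm_of_nonneg (by positivity : (0 : ℝ) ≤ |x| + 1)]
  refine mul_le_mul_of_nonneg_left ?_ (norm_nonneg _)
  calc |x| ^ j ≤ (|x| + 1) ^ j := by gcongr; linarith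
    _ ≤ (|x| + 1) ^ (j + N) := pow_le_pow_right₀ hr (Nat.le_add_right j N)

theorem continuous_tsum_mul_pow (hs : ∀ x : ℝ, Summable fun k => ‖c k * x ^ k‖) :
    Continuous fun x => ∑' k, c k * x ^ k := by
  refine continuous_iff_continuousAt.2 fun x => ?_
  set r := |x| + 1
  have hball : Icc (-r) r ∈ nhds x :=
    Icc_mem_nhds (by linarith [neg_abs_le x]) (by linarith [le_abs_self x])
  refine (continuousOn_tsum (fun k => by fun_prop) (hs r) fun k y hy => ?_).continuousAt hball
  exact norm_mul_pow_le_of_abs_le (abs_le.2 hy |>.trans (le_abs_self r)) k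

theorem hasSum_intervalIntegral_tsum_mul_pow (hs : ∀ x : ℝ, Summable fun k => ‖c k * x ^ k‖)
    (b : ℝ) :
    HasSum (fun k => c k * b ^ (k + 1) / (k + 1)) (∫ x in (0 : ℝ)..b, ∑' k, c k * x ^ k) := by
  have H := intervalIntegral.hasSum_integral_of_dominated_convergence
    (μ := volume) (a := 0) (b := b)
    (F := fun k (x : ℝ) => c k * x ^ k) (fun k _ => ‖c k * b ^ k‖)
    (fun k => by fun_prop) (fun k => ae_of_all _ fun x hx => ?_)
    (ae_of_all _ fun _ _ => hs b) intervalIntegrable_const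
    (ae_of_all _ fun x _ => (hs x).of_norm.hasSum)
  · refine H.congr_fun fun k => ?_
    rw [intervalIntegral.integral_const_mul, integral_pow]
    ring
  · refine norm_mul_pow_le_of_abs_le ?_ k
    rcases le_total 0 b with hb | hb
    · rw [uIoc_of_le hb] at hx
      rw [abs_of_pos hx.1, abs_of_nonneg hb]; exact hx.2
    · rw [uIoc_of_ge hb] at hx
      rw [abs_of_nonpos hx.2, abs_of_nonpos hb]; linarith [hx.1]

end PowerSeries

theorem div_pow_succ_eq_of_hasSum {c : ℕ → ℝ} {x s : ℝ} (hs : HasSum (fun k => c k * x ^ k) s)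
    (hx : x ≠ 0) (n : ℕ) :
    s / x ^ (n + 1) =
      ∑ k ∈ Finset.range n, c k / x ^ (n - k + 1) + c n / x + ∑' j, c (n + 1 + j) * x ^ j := by
  have htail : ∑' j, c (j + (n + 1)) * x ^ (j + (n + 1)) =
      x ^ (n + 1) * ∑' j, c (n + 1 + j) * x ^ j := by
    rw [← tsum_mul_left]
    exact tsum_congr fun j => by rw [add_comm j, pow_add]; ring
  have hterm : ∀ k ∈ Finset.range n, c k * x ^ k / x ^ (n + 1) = c k / x ^ (n - k + 1) := by
    intro k hk
    rw [show n + 1 = k + (n - k + 1) by grind, pow_add]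
    field_simp
  rw [← hs.tsum_eq, ← hs.summable.sum_add_tsum_nat_add (n + 1), htail, Finset.sum_range_succ,
    add_div, add_div, Finset.sum_div, Finset.sum_congr rfl hterm, pow_succ]
  field_simp

theorem integral_div_pow_succ (c : ℝ) {q : ℕ} (hq : q ≠ 0) {ε a : ℝ} (hε : 0 < ε) (ha : 0 < a) :
    ∫ x in ε..a, c / x ^ (q + 1) = c / (q * ε ^ q) - c / (q * a ^ q) := by
  have hzpow : ∀ x : ℝ, c / x ^ (q + 1) = c * x ^ (-(q + 1 : ℤ)) := fun x => by
    rw [zpow_neg, div_eq_mul_inv]; norm_cast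
  simp_rw [hzpow]
  rw [intervalIntegral.integral_const_mul,
    integral_zpow (Or.inr ⟨by omega, notMem_uIcc_of_lt hε ha⟩)]
  push_cast
  rw [show -((q : ℤ) + 1) + 1 = -(q : ℤ) by ring, show -((q : ℝ) + 1) + 1 = -q by ring]
  simp only [zpow_neg, zpow_natCast]
  have : (q : ℝ) ≠ 0 := by exact_mod_cast hq
  field_simp
  ring

theorem integral_div_pow_succ_eq_of_hasSum {c : ℕ → ℝ} {f : ℝ → ℝ}
    (hs : ∀ x, HasSum (fun k => c k * x ^ k) (f x)) (n : ℕ) {ε a : ℝ} (hε : 0 < ε) (ha : 0 < a)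
    (htail : IntervalIntegrable (fun x => ∑' j, c (n + 1 + j) * x ^ j) volume ε a) :
    ∫ x in ε..a, f x / x ^ (n + 1) =
      ∑ k ∈ Finset.range n,
          (c k / ((n - k : ℕ) * ε ^ (n - k)) - c k / ((n - k : ℕ) * a ^ (n - k))) +
        c n * (Real.log a - Real.log ε) + ∫ x in ε..a, ∑' j, c (n + 1 + j) * x ^ j := by
  have h0 : (0 : ℝ) ∉ uIcc ε a := notMem_uIcc_of_lt hε ha
  have hne : ∀ x ∈ uIcc ε a, x ≠ 0 := fun x hx hx0 => h0 (hx0 ▸ hx)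
  have hpow : ∀ k ∈ Finset.range n,
      IntervalIntegrable (fun x => c k / x ^ (n - k + 1)) volume ε a := fun k _ =>
    (continuousOn_const.div (continuousOn_pow _) fun x hx =>
      pow_ne_zero _ (hne x hx)).intervalIntegrable
  have hinv : IntervalIntegrable (fun x => c n / x) volume ε a :=
    (continuousOn_const.div continuousOn_id hne).intervalIntegrable
  have hsum : IntervalIntegrable
      (fun x => ∑ k ∈ Finset.range n, c k / x ^ (n - k + 1)) volume ε a := by
    simpa only [Finset.sum_fn] using IntervalIntegrable.sum _ hpow
  rw [intervalIntegral.integral_congr fun x hx => div_pow_succ_eq_of_hasSum (hs x) (hne x hx) n,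
    intervalIntegral.integral_add (hsum.add hinv) htail, intervalIntegral.integral_add hsum hinv,
    intervalIntegral.integral_finsetSum hpow,
    Finset.sum_congr rfl fun k hk => integral_div_pow_succ (c k) (by grind) hε ha]
  simp only [div_eq_mul_inv (c n), intervalIntegral.integral_const_mul, integral_inv h0,
    Real.log_div ha.ne' hε.ne']

/-- Finite part of `∫_0^a f(x)/x^m dx` for `f` with entire complex extension:
the regularized limit exists and has the stated series value. -/
theorem stmt_0 (f : ℝ → ℝ) (F : ℂ → ℂ) (c : ℕ → ℝ)
    (hF : Differentiable ℂ F) (hFf : ∀ x : ℝ, F x = f x)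
    (hc : ∀ k, (c k : ℂ) = iteratedDeriv k F 0 / (Nat.factorial k))
    (m : ℕ) (hm : 1 ≤ m) (a : ℝ) (ha : 0 < a) :
    ∃ S : ℝ,
      HasSum (fun j : ℕ => c (m + j) * a ^ (j + 1) / (j + 1)) S ∧
      Tendsto
        (fun ε : ℝ =>
          (∫ x in ε..a, f x / x ^ m) -
            ((∑ k ∈ Finset.range (m - 1),
                c k / (((m - k - 1 : ℕ) : ℝ) * ε ^ (m - k - 1))) -
              c (m - 1) * Real.log ε))
        (nhdsWithin 0 (Set.Ioi 0))
        (nhds (c (m - 1) * Real.log a -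
          (∑ k ∈ Finset.range (m - 1),
              c k / (((m - k - 1 : ℕ) : ℝ) * a ^ (m - k - 1))) + S)) := by
  obtain ⟨n, rfl⟩ := Nat.exists_eq_add_of_le' hm
  have hs := hasSum_taylorSeries_of_entire_extension hF hFf hc
  have htail := summable_norm_mul_pow_shift
    (summable_norm_mul_pow_of_forall_summable fun x => (hs x).summable) (n + 1)
  set h := fun x : ℝ => ∑' j, c (n + 1 + j) * x ^ j
  have hint : ∀ x y, IntervalIntegrable h volume x y :=
    (continuous_tsum_mul_pow htail).intervalIntegrable
  refine ⟨∫ x in (0 : ℝ)..a, h x, hasSum_intervalIntegral_tsum_mul_pow htail a, ?_⟩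
  have hsub : ∀ k, n + 1 - k - 1 = n - k := fun k => by omega
  simp only [Nat.add_sub_cancel, hsub]
  have hlower : Continuous fun ε => ∫ x in ε..a, h x := by
    have := intervalIntegral.continuous_primitive hint a
    simp only [intervalIntegral.integral_symm a]
    fun_prop
  refine Tendsto.congr' ?_ (tendsto_const_nhds.add
    ((hlower.tendsto 0).mono_left nhdsWithin_le_nhds))
  filter_upwards [self_mem_nhdsWithin] with ε hε
  rw [integral_div_pow_succ_eq_of_hasSum hs n hε ha (hint ε a), Finset.sum_sub_distrib]
  ring
end

section
/- Let f : ℝ → ℝ admit an entire complex extension with Taylor coefficients c_k = f^{(k)}(0)/k!, let m ≥ 1 be an integer, 0 < ν < 1 and a > 0. Then the limit as ε → 0⁺ of [∫_ε^a f(x) x^{-m-ν} dx − Σ_{k=0}^{m-1} c_k ε^{k+1-m-ν}/(m+ν-k-1)] exists and equals Σ_{k=0}^{∞} c_k a^{k+1-m-ν}/(k+1-m-ν), where the infinite series converges. -/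
/-!
Expand `f` in its Taylor series and integrate term by term over `[ε, a]`, where the series is
dominated by the summable constants `|c k| a ^ k / ε ^ (m + ν)`. With `e k = k + 1 - m - ν`, the
`k`-th term contributes `c k (a ^ e k - ε ^ e k) / e k`. For `k < m` the `ε`-parts are exactly the
subtracted counterterms; for `k ≥ m` one has `e k ≥ 1 - ν > 0`, so the remaining `ε`-parts are
bounded by `ε ^ (1 - ν) / (1 - ν) · ∑ |c k| a ^ (k - m)` and vanish as `ε → 0⁺`.
-/

open Filter MeasureTheory Set Topology

theorem hasSum_mul_pow_of_entire {f : ℝ → ℝ} {F : ℂ → ℂ} {c : ℕ → ℝ}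
    (hF : Differentiable ℂ F) (hFf : ∀ x : ℝ, F x = f x)
    (hc : ∀ k, (c k : ℂ) = iteratedDeriv k F 0 / (Nat.factorial k)) (x : ℝ) :
    HasSum (fun k => c k * x ^ k) (f x) := by
  rw [← Complex.hasSum_ofReal, ← hFf]
  convert Complex.hasSum_taylorSeries_of_entire hF 0 x using 1
  · rfl
  ext k
  rw [Complex.ofReal_mul, hc, smul_eq_mul, smul_eq_mul, sub_zero, Complex.ofReal_pow]
  ring

theorem summable_abs_mul_pow_of_summable_mul_pow {c : ℕ → ℝ} {x r : ℝ}
    (hx : Summable fun k => c k * x ^ k) (hr : 0 ≤ r) (hrx : r < |x|) :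
    Summable fun k => |c k| * r ^ k := by
  obtain ⟨C, hC⟩ := hx.tendsto_atTop_zero.norm.bddAbove_range
  have hx0 : 0 < |x| := hr.trans_lt hrx
  refine Summable.of_nonneg_of_le (fun k => by positivity) (fun k => ?_)
    ((summable_geometric_of_lt_one (div_nonneg hr hx0.le) ((div_lt_one hx0).2 hrx)).mul_left C)
  calc |c k| * r ^ k = ‖c k * x ^ k‖ * (r / |x|) ^ k := by
        rw [norm_mul, norm_pow, Real.norm_eq_abs, Real.norm_eq_abs, div_pow]
        field_simp
    _ ≤ C * (r / |x|) ^ k := by gcongr; exact hC ⟨k, rfl⟩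

theorem integral_pow_div_rpow {ε a s : ℝ} (hε : 0 < ε) (ha : 0 < a) {k : ℕ}
    (hks : (k : ℝ) + 1 - s ≠ 0) :
    ∫ x in ε..a, x ^ k / x ^ s =
      (a ^ ((k : ℝ) + 1 - s) - ε ^ ((k : ℝ) + 1 - s)) / ((k : ℝ) + 1 - s) := by
  have h0 : (0 : ℝ) ∉ uIcc ε a := notMem_uIcc_of_lt hε ha
  have hpow : EqOn (fun x : ℝ => x ^ k / x ^ s) (fun x => x ^ ((k : ℝ) - s)) (uIcc ε a) :=
    fun x hx => by
      dsimp only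
      rw [← Real.rpow_natCast, Real.rpow_sub ((lt_min hε ha).trans_le hx.1)]
  rw [intervalIntegral.integral_congr hpow, integral_rpow (Or.inr ⟨?_, h0⟩)]
  · rw [sub_add_eq_add_sub]
  · contrapose! hks; linarith

theorem hasSum_integral_mul_pow_div_rpow {f : ℝ → ℝ} {c : ℕ → ℝ} {s ε a : ℝ}
    (hf : ∀ x, HasSum (fun k => c k * x ^ k) (f x)) (hc : Summable fun k => |c k| * a ^ k)
    (hs : 0 ≤ s) (hks : ∀ k : ℕ, (k : ℝ) + 1 - s ≠ 0) (hε : 0 < ε) (hεa : ε ≤ a) :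
    HasSum
      (fun k => c k * ((a ^ ((k : ℝ) + 1 - s) - ε ^ ((k : ℝ) + 1 - s)) / ((k : ℝ) + 1 - s)))
      (∫ x in ε..a, f x / x ^ s) := by
  have hbound : ∀ k, ∀ x ∈ uIoc ε a, ‖c k * x ^ k / x ^ s‖ ≤ |c k| * a ^ k / ε ^ s := by
    intro k x hx
    rw [uIoc_of_le hεa] at hx
    have hx0 : 0 < x := hε.trans hx.1
    rw [Real.norm_eq_abs, abs_div, abs_mul, abs_pow, abs_of_pos hx0,
      abs_of_pos (Real.rpow_pos_of_pos hx0 s)]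
    have ha : 0 ≤ a := hx0.le.trans hx.2
    gcongr
    exacts [hx.2, hx.1.le]
  have hdom := intervalIntegral.hasSum_integral_of_dominated_convergence (μ := volume)
    (F := fun k x => c k * x ^ k / x ^ s) (fun k _ => |c k| * a ^ k / ε ^ s)
    (fun k => (by fun_prop : Measurable fun x : ℝ => c k * x ^ k / x ^ s).aestronglyMeasurable)
    (fun k => ae_of_all _ (hbound k))
    (ae_of_all _ fun _ _ => hc.div_const _) intervalIntegrable_const
    (ae_of_all _ fun x _ => (hf x).div_const _)
  simpa only [mul_div_assoc, intervalIntegral.integral_const_mul,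
    integral_pow_div_rpow hε (hε.trans_le hεa) (hks _)] using hdom

theorem norm_mul_rpow_div_le {b : ℕ → ℝ} {t ε a : ℝ} (ht : 0 < t) (hε : 0 ≤ ε)
    (hεa : ε ≤ a) (j : ℕ) :
    ‖b j * ε ^ ((j : ℝ) + t) / ((j : ℝ) + t)‖ ≤ |b j| * a ^ j * (ε ^ t / t) := by
  have hjt : 0 < (j : ℝ) + t := by positivity
  rw [Real.rpow_add' hε hjt.ne', Real.rpow_natCast, Real.norm_eq_abs, abs_div, abs_mul, abs_mul,
    abs_of_pos hjt, abs_pow, abs_of_nonneg hε, abs_of_nonneg (Real.rpow_nonneg hε t),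
    ← mul_assoc, mul_div_assoc]
  have ha : 0 ≤ a := hε.trans hεa
  gcongr
  linarith [j.cast_nonneg (α := ℝ)]

theorem summable_mul_rpow_div {b : ℕ → ℝ} {t ε a : ℝ}
    (hb : Summable fun j => |b j| * a ^ j) (ht : 0 < t) (hε : 0 ≤ ε) (hεa : ε ≤ a) :
    Summable fun j : ℕ => b j * ε ^ ((j : ℝ) + t) / ((j : ℝ) + t) :=
  Summable.of_norm_bounded (hb.mul_right _) (norm_mul_rpow_div_le ht hε hεa)

theorem tendsto_tsum_mul_rpow_div_zero {b : ℕ → ℝ} {t a : ℝ}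
    (hb : Summable fun j => |b j| * a ^ j) (ht : 0 < t) (ha : 0 < a) :
    Tendsto (fun ε => ∑' j : ℕ, b j * ε ^ ((j : ℝ) + t) / ((j : ℝ) + t)) (𝓝[>] 0) (𝓝 0) := by
  have hlim :
      Tendsto (fun ε : ℝ => (∑' j, |b j| * a ^ j) * (ε ^ t / t)) (𝓝[>] 0) (𝓝 0) := by
    have := ((Real.continuousAt_rpow_const 0 t (Or.inr ht.le)).tendsto.div_const t).const_mul
      (∑' j, |b j| * a ^ j)
    simpa [Real.zero_rpow ht.ne'] using this.mono_left nhdsWithin_le_nhds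
  refine squeeze_zero_norm' ?_ hlim
  filter_upwards [Ioc_mem_nhdsGT ha] with ε hε
  exact tsum_of_norm_bounded (hb.hasSum.mul_right _)
    (norm_mul_rpow_div_le ht hε.1.le hε.2)

theorem summable_abs_nat_add_mul_pow {c : ℕ → ℝ} {a : ℝ}
    (hca : Summable fun k => |c k| * a ^ k) (ha : a ≠ 0) (m : ℕ) :
    Summable fun j => |c (j + m)| * a ^ j :=
  (((summable_nat_add_iff m).2 hca).div_const (a ^ m)).congr fun j => by
    rw [pow_add]; field_simp

section FinitePart

variable {c : ℕ → ℝ} {m : ℕ} {ν a : ℝ}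

/-- The antiderivative of `c k * x ^ (k - m - ν)`, evaluated at `ε`. -/
noncomputable def finitePartTerm (c : ℕ → ℝ) (m : ℕ) (ν ε : ℝ) (k : ℕ) : ℝ :=
  c k * ε ^ ((k : ℝ) + 1 - m - ν) / ((k : ℝ) + 1 - m - ν)

theorem natCast_add_one_sub_ne_zero (hν0 : 0 < ν) (hν1 : ν < 1) (k : ℕ) :
    (k : ℝ) + 1 - (m + ν) ≠ 0 := by
  rcases lt_or_ge k m with hk | hk
  · have : (k : ℝ) + 1 ≤ m := by exact_mod_cast hk
    linarith
  · have : (m : ℝ) ≤ k := by exact_mod_cast hk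
    linarith

theorem finitePartTerm_nat_add (ε : ℝ) (j : ℕ) :
    finitePartTerm c m ν ε (j + m) =
      c (j + m) * ε ^ ((j : ℝ) + (1 - ν)) / ((j : ℝ) + (1 - ν)) := by
  have he : ((j + m : ℕ) : ℝ) + 1 - m - ν = j + (1 - ν) := by push_cast; ring
  rw [finitePartTerm, he]

theorem summable_finitePartTerm (hca : Summable fun k => |c k| * a ^ k) (ha : 0 < a)
    (hν1 : ν < 1) {ε : ℝ} (hε : 0 ≤ ε) (hεa : ε ≤ a) : Summable (finitePartTerm c m ν ε) :=
  (summable_nat_add_iff m).1 <| by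
    simpa only [finitePartTerm_nat_add] using
      summable_mul_rpow_div (summable_abs_nat_add_mul_pow hca ha.ne' m) (sub_pos.2 hν1) hε hεa

theorem tendsto_tsum_finitePartTerm_nat_add (hca : Summable fun k => |c k| * a ^ k)
    (ha : 0 < a) (hν1 : ν < 1) :
    Tendsto (fun ε => ∑' j, finitePartTerm c m ν ε (j + m)) (𝓝[>] 0) (𝓝 0) := by
  simpa only [finitePartTerm_nat_add] using
    tendsto_tsum_mul_rpow_div_zero (summable_abs_nat_add_mul_pow hca ha.ne' m)
      (sub_pos.2 hν1) ha

theorem integral_div_rpow_sub_sum_eq {f : ℝ → ℝ}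
    (hf : ∀ x, HasSum (fun k => c k * x ^ k) (f x)) (hca : Summable fun k => |c k| * a ^ k)
    (hν0 : 0 < ν) (hν1 : ν < 1) {ε : ℝ} (hε : 0 < ε) (hεa : ε ≤ a) :
    (∫ x in ε..a, f x / x ^ ((m : ℝ) + ν)) -
        ∑ k ∈ Finset.range m, c k * ε ^ ((k : ℝ) + 1 - m - ν) / ((m : ℝ) + ν - k - 1) =
      ∑' k, finitePartTerm c m ν a k - ∑' j, finitePartTerm c m ν ε (j + m) := by
  have ha : 0 < a := hε.trans_le hεa
  have hsa := summable_finitePartTerm (m := m) hca ha hν1 ha.le le_rfl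
  have hsε := summable_finitePartTerm (m := m) hca ha hν1 hε.le hεa
  have hI : HasSum (fun k => finitePartTerm c m ν a k - finitePartTerm c m ν ε k)
      (∫ x in ε..a, f x / x ^ ((m : ℝ) + ν)) := by
    convert hasSum_integral_mul_pow_div_rpow hf hca (by positivity)
      (natCast_add_one_sub_ne_zero hν0 hν1) hε hεa using 2 with k
    simp only [finitePartTerm, sub_sub]
    ring
  have hcounter :
      ∑ k ∈ Finset.range m, c k * ε ^ ((k : ℝ) + 1 - m - ν) / ((m : ℝ) + ν - k - 1) =
        -∑ k ∈ Finset.range m, finitePartTerm c m ν ε k := by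
    rw [← Finset.sum_neg_distrib]
    refine Finset.sum_congr rfl fun k _ => ?_
    rw [finitePartTerm, show (m : ℝ) + ν - k - 1 = -((k : ℝ) + 1 - m - ν) by ring,
      div_neg]
  rw [hcounter, ← hI.tsum_eq, hsa.tsum_sub hsε, ← hsε.sum_add_tsum_nat_add m]
  ring

end FinitePart

theorem stmt_2_general (f : ℝ → ℝ) (F : ℂ → ℂ) (c : ℕ → ℝ)
    (hF : Differentiable ℂ F) (hFf : ∀ x : ℝ, F x = f x)
    (hc : ∀ k, (c k : ℂ) = iteratedDeriv k F 0 / (Nat.factorial k))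
    (m : ℕ) (ν : ℝ) (hν0 : 0 < ν) (hν1 : ν < 1) (a : ℝ) (ha : 0 < a) :
    ∃ S : ℝ,
      HasSum (fun k : ℕ => c k * a ^ ((k : ℝ) + 1 - m - ν) / ((k : ℝ) + 1 - m - ν)) S ∧
      Tendsto
        (fun ε : ℝ =>
          (∫ x in ε..a, f x / x ^ ((m : ℝ) + ν)) -
            ∑ k ∈ Finset.range m,
              c k * ε ^ ((k : ℝ) + 1 - m - ν) / ((m : ℝ) + ν - k - 1))
        (nhdsWithin 0 (Set.Ioi 0)) (nhds S) := by
  have hf := hasSum_mul_pow_of_entire hF hFf hc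
  have hca : Summable fun k => |c k| * a ^ k :=
    summable_abs_mul_pow_of_summable_mul_pow (hf (a + 1)).summable ha.le
      (by rw [abs_of_pos (by linarith)]; linarith)
  refine ⟨∑' k, finitePartTerm c m ν a k,
    (summable_finitePartTerm hca ha hν1 ha.le le_rfl).hasSum, ?_⟩
  have hlim := (tendsto_const_nhds (x := ∑' k, finitePartTerm c m ν a k)).sub
    (tendsto_tsum_finitePartTerm_nat_add (m := m) hca ha hν1)
  rw [sub_zero] at hlim
  refine hlim.congr' ?_
  filter_upwards [Ioc_mem_nhdsGT ha] with ε ⟨hε, hεa⟩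
  exact (integral_div_rpow_sub_sum_eq hf hca hν0 hν1 hε hεa).symm

/-- Finite part of `∫_0^a f(x)/x^{m+ν} dx`, `0 < ν < 1`, for `f` with entire complex
extension: the regularized limit exists and equals `Σ_{k=0}^∞ c_k a^{k+1-m-ν}/(k+1-m-ν)`. -/
theorem stmt_2 (f : ℝ → ℝ) (F : ℂ → ℂ) (c : ℕ → ℝ)
    (hF : Differentiable ℂ F) (hFf : ∀ x : ℝ, F x = f x)
    (hc : ∀ k, (c k : ℂ) = iteratedDeriv k F 0 / (Nat.factorial k))
    (m : ℕ) (hm : 1 ≤ m) (ν : ℝ) (hν0 : 0 < ν) (hν1 : ν < 1) (a : ℝ) (ha : 0 < a) :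
    ∃ S : ℝ,
      HasSum (fun k : ℕ => c k * a ^ ((k : ℝ) + 1 - m - ν) / ((k : ℝ) + 1 - m - ν)) S ∧
      Tendsto
        (fun ε : ℝ =>
          (∫ x in ε..a, f x / x ^ ((m : ℝ) + ν)) -
            ∑ k ∈ Finset.range m,
              c k * ε ^ ((k : ℝ) + 1 - m - ν) / ((m : ℝ) + ν - k - 1))
        (nhdsWithin 0 (Set.Ioi 0)) (nhds S) :=
  stmt_2_general f F c hF hFf hc m ν hν0 hν1 a ha
end

section
/- Let f : ℝ → ℝ admit an entire complex extension with Taylor coefficients c_k = f^{(k)}(0)/k!, let m ≥ 1 be an integer, 0 < ν < 1, and suppose x ↦ f(x) x^{-m-ν} is integrable on [1, ∞). Then the limit as ε → 0⁺ of [∫_ε^∞ f(x) x^{-m-ν} dx − Σ_{k=0}^{m-1} c_k ε^{k+1-m-ν}/(m+ν-k-1)] exists and equals the limit as a → ∞ of Σ_{k=m}^{∞} c_k a^{k+1-m-ν}/(k+1-m-ν), and in particular the latter limit exists. -/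
open Filter MeasureTheory Set

private lemma fp_tendsto_aux (g : ℝ → ℝ) (hg : IntegrableOn g (Ioi 0)) :
    Tendsto (fun ε => ∫ x in Ioi ε, g x) (nhdsWithin 0 (Ioi 0))
      (nhds (∫ x in Ioi (0:ℝ), g x)) := by
  have h := MeasureTheory.tendsto_integral_filter_of_dominated_convergence
    (μ := (volume : Measure ℝ).restrict (Ioi 0)) (l := nhdsWithin (0:ℝ) (Ioi 0))
    (F := fun ε => (Ioi ε).indicator g) (f := g) (fun x => ‖g x‖)
    (Eventually.of_forall fun ε => hg.1.indicator measurableSet_Ioi)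
    (Eventually.of_forall fun ε => Eventually.of_forall fun x =>
      norm_indicator_le_norm_self g x)
    hg.norm ?_
  · refine Tendsto.congr' ?_ h
    filter_upwards [self_mem_nhdsWithin] with ε (hε : 0 < ε)
    rw [MeasureTheory.integral_indicator measurableSet_Ioi,
      Measure.restrict_restrict measurableSet_Ioi,
      inter_eq_left.mpr (Ioi_subset_Ioi hε.le)]
  · rw [ae_restrict_iff' measurableSet_Ioi]
    refine Eventually.of_forall fun x (hx : 0 < x) => ?_
    refine tendsto_const_nhds.congr' ?_
    filter_upwards [Ioo_mem_nhdsGT_of_mem (by constructor <;> simp [hx] : (0:ℝ) ∈ Ico 0 x)]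
      with ε hε
    exact (indicator_of_mem (mem_Ioi.mpr hε.2) g).symm

private lemma fp_habs {c : ℕ → ℝ} (hsum : ∀ x : ℝ, Summable (fun k => c k * x ^ k))
    (r : ℝ) (hr : 0 ≤ r) : Summable (fun k => |c k| * r ^ k) := by
  set x : ℝ := 2 * r + 1 with hx
  have hx0 : 0 < x := by positivity
  obtain ⟨M, hM⟩ := ((hsum x).tendsto_atTop_zero.abs.bddAbove_range).imp
    (fun M hM => fun k => hM (Set.mem_range_self k))
  have hMnn : 0 ≤ M := le_trans (abs_nonneg _) (hM 0)
  refine Summable.of_nonneg_of_le (fun k => by positivity)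
    (fun k => ?_) ((summable_geometric_of_lt_one (by norm_num) (by norm_num :
      (1:ℝ)/2 < 1)).mul_left M)
  have h1 : |c k| * r ^ k = |c k * x ^ k| * (r / x) ^ k := by
    rw [abs_mul, abs_pow, abs_of_pos hx0, mul_assoc, ← mul_pow]
    congr 2
    field_simp
  rw [h1]
  have h2 : (r / x) ^ k ≤ (1/2) ^ k := by
    apply pow_le_pow_left₀ (by positivity)
    rw [div_le_div_iff₀ hx0 (by norm_num)]
    linarith
  calc |c k * x ^ k| * (r / x) ^ k ≤ M * (1/2) ^ k :=
        mul_le_mul (hM k) h2 (by positivity) hMnn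
    _ = M * ((1:ℝ)/2) ^ k := rfl

private lemma fp_hgs {f : ℝ → ℝ} {c : ℕ → ℝ} {m : ℕ} {ν : ℝ}
    (hsum : ∀ x : ℝ, HasSum (fun k => c k * x ^ k) (f x))
    {x : ℝ} (hx : 0 < x) :
    HasSum (fun j => c (m + j) * x ^ ((j:ℝ) - ν))
      ((f x - ∑ k ∈ Finset.range m, c k * x ^ k) / x ^ ((m:ℝ) + ν)) := by
  have h1 : HasSum (fun j => c (j + m) * x ^ (j + m))
      (f x - ∑ k ∈ Finset.range m, c k * x ^ k) := by
    rw [hasSum_nat_add_iff (f := fun k => c k * x ^ k) m, sub_add_cancel]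
    exact hsum x
  have h2 := h1.div_const (x ^ ((m:ℝ) + ν))
  refine h2.congr_fun fun j => ?_
  rw [add_comm j m, ← Real.rpow_natCast x (m + j), mul_div_assoc, ← Real.rpow_sub hx]
  congr 1
  push_cast
  ring

private lemma fp_bound {f : ℝ → ℝ} {c : ℕ → ℝ} {m : ℕ} {ν : ℝ}
    (habs1 : Summable (fun j => |c (m + j)|))
    (hgs : ∀ x : ℝ, 0 < x → HasSum (fun j => c (m + j) * x ^ ((j:ℝ) - ν))
      ((f x - ∑ k ∈ Finset.range m, c k * x ^ k) / x ^ ((m:ℝ) + ν)))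
    {x : ℝ} (hx : x ∈ Ioc (0:ℝ) 1) :
    |(f x - ∑ k ∈ Finset.range m, c k * x ^ k) / x ^ ((m:ℝ) + ν)|
      ≤ (∑' j, |c (m + j)|) * x ^ (-ν) := by
  obtain ⟨hx0, hx1⟩ := hx
  have hterm : ∀ j : ℕ, |c (m + j) * x ^ ((j:ℝ) - ν)| ≤ |c (m + j)| * x ^ (-ν) := by
    intro j
    rw [abs_mul, abs_of_nonneg (Real.rpow_nonneg hx0.le _)]
    refine mul_le_mul_of_nonneg_left ?_ (abs_nonneg _)
    rw [show (j:ℝ) - ν = (j:ℝ) + (-ν) by ring, Real.rpow_add hx0]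
    calc x ^ (j:ℝ) * x ^ (-ν) ≤ 1 * x ^ (-ν) := by
          refine mul_le_mul_of_nonneg_right ?_ (Real.rpow_nonneg hx0.le _)
          exact Real.rpow_le_one hx0.le hx1 (Nat.cast_nonneg j)
      _ = x ^ (-ν) := one_mul _
  have hsummable : Summable (fun j => |c (m + j) * x ^ ((j:ℝ) - ν)|) :=
    Summable.of_nonneg_of_le (fun j => abs_nonneg _) hterm (habs1.mul_right _)
  rw [← (hgs x hx0).tsum_eq]
  have h1 : |∑' j, c (m + j) * x ^ ((j:ℝ) - ν)| ≤ ∑' j, |c (m + j) * x ^ ((j:ℝ) - ν)| := by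
    simpa only [Real.norm_eq_abs] using
      norm_tsum_le_tsum_norm (f := fun j => c (m + j) * x ^ ((j:ℝ) - ν))
        (by simpa only [Real.norm_eq_abs] using hsummable)
  have h2 : ∑' j, |c (m + j) * x ^ ((j:ℝ) - ν)| ≤ ∑' j, |c (m + j)| * x ^ (-ν) :=
    Summable.tsum_le_tsum hterm hsummable (habs1.mul_right _)
  have h3 : ∑' j, |c (m + j)| * x ^ (-ν) = (∑' j, |c (m + j)|) * x ^ (-ν) := tsum_mul_right
  linarith

/-- Finite part of `∫_0^∞ f(x)/x^{m+ν} dx`, `0 < ν < 1`, for `f` with entire complex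
extension and `f(x) x^{-m-ν}` integrable at infinity: the regularized limit exists and
equals `lim_{a→∞} Σ_{k=m}^∞ c_k a^{k+1-m-ν}/(k+1-m-ν)`. -/
theorem stmt_3 (f : ℝ → ℝ) (F : ℂ → ℂ) (c : ℕ → ℝ)
    (hF : Differentiable ℂ F) (hFf : ∀ x : ℝ, F x = f x)
    (hc : ∀ k, (c k : ℂ) = iteratedDeriv k F 0 / (Nat.factorial k))
    (m : ℕ) (hm : 1 ≤ m) (ν : ℝ) (hν0 : 0 < ν) (hν1 : ν < 1)
    (hint : IntegrableOn (fun x => f x / x ^ ((m : ℝ) + ν)) (Set.Ici 1)) :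
    ∃ L : ℝ,
      Tendsto
        (fun ε : ℝ =>
          (∫ x in Set.Ioi ε, f x / x ^ ((m : ℝ) + ν)) -
            ∑ k ∈ Finset.range m,
              c k * ε ^ ((k : ℝ) + 1 - m - ν) / ((m : ℝ) + ν - k - 1))
        (nhdsWithin 0 (Set.Ioi 0)) (nhds L) ∧
      Tendsto
        (fun a : ℝ =>
          ∑' j : ℕ, c (m + j) * a ^ ((j : ℝ) + 1 - ν) / ((j : ℝ) + 1 - ν))
        atTop (nhds L) := by
  -- continuity of f
  have hfc : Continuous f := by
    have hfe : f = fun x : ℝ => (F x).re := by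
      funext x; rw [hFf x, Complex.ofReal_re]
    rw [hfe]
    exact Complex.continuous_re.comp (hF.continuous.comp Complex.continuous_ofReal)
  -- Taylor expansion of f
  have hsum : ∀ x : ℝ, HasSum (fun k => c k * x ^ k) (f x) := by
    intro x
    have h := Complex.hasSum_taylorSeries_of_entire hF 0 x
    rw [hFf x] at h
    rw [← Complex.hasSum_ofReal]
    refine h.congr_fun fun n => ?_
    push_cast
    rw [hc n]
    field_simp
    ring
  have habs : ∀ r : ℝ, 0 ≤ r → Summable (fun k => |c k| * r ^ k) :=
    fp_habs (fun x => (hsum x).summable)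
  have habs1 : Summable (fun j => |c (m + j)|) := by
    have h := (habs 1 zero_le_one).congr (g := fun k => |c k|) (fun k => by simp)
    exact h.comp_injective (add_right_injective m)
  set T : ℝ → ℝ := fun x => ∑ k ∈ Finset.range m, c k * x ^ k with hT
  set g : ℝ → ℝ := fun x => (f x - T x) / x ^ ((m:ℝ) + ν) with hg
  have hgs : ∀ x : ℝ, 0 < x → HasSum (fun j => c (m + j) * x ^ ((j:ℝ) - ν)) (g x) :=
    fun x hx => fp_hgs hsum hx
  have hbound : ∀ x ∈ Ioc (0:ℝ) 1, |g x| ≤ (∑' j, |c (m + j)|) * x ^ (-ν) :=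
    fun x hx => fp_bound habs1 hgs hx
  -- continuity of g on Ioi 0
  have hTc : Continuous T := by
    apply continuous_finset_sum
    intro k _
    exact continuous_const.mul (continuous_pow k)
  have hgc : ContinuousOn g (Ioi 0) := by
    refine ContinuousOn.div (hfc.sub hTc).continuousOn ?_ ?_
    · exact fun x hx =>
        (Real.continuousAt_rpow_const x _ (Or.inl (ne_of_gt hx))).continuousWithinAt
    · exact fun x hx => (Real.rpow_pos_of_pos hx _).ne'
  -- rewriting x^k / x^(m+ν)
  have hxk : ∀ x : ℝ, 0 < x → ∀ k : ℕ, x ^ k / x ^ ((m:ℝ) + ν) = x ^ ((k:ℝ) - m - ν) := by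
    intro x hx k
    rw [← Real.rpow_natCast x k, ← Real.rpow_sub hx]
    congr 1
    ring
  -- the exponents k - m - ν are < -1 for k < m
  have hklt : ∀ k ∈ Finset.range m, (k:ℝ) - m - ν < -1 := by
    intro k hk
    have h1 : (k:ℝ) + 1 ≤ m := by exact_mod_cast Finset.mem_range.mp hk
    linarith
  -- g expressed as difference on positive reals
  have hgeq : ∀ x : ℝ, 0 < x →
      g x = f x / x ^ ((m:ℝ) + ν) - ∑ k ∈ Finset.range m, c k * x ^ ((k:ℝ) - m - ν) := by
    intro x hx
    simp only [hg, hT, sub_div, Finset.sum_div]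
    congr 1
    exact Finset.sum_congr rfl fun k _ => by rw [mul_div_assoc, hxk x hx k]
  -- integrability of g
  have hInt1 : IntegrableOn g (Ioc 0 1) := by
    have hb : IntegrableOn (fun x : ℝ => (∑' j, |c (m + j)|) * x ^ (-ν)) (Ioc (0:ℝ) 1) :=
      ((intervalIntegral.intervalIntegrable_rpow' (by linarith : (-1:ℝ) < -ν)).1).const_mul _
    refine Integrable.mono' hb
      ((hgc.mono Ioc_subset_Ioi_self).aestronglyMeasurable measurableSet_Ioc) ?_
    refine (ae_restrict_iff' measurableSet_Ioc).mpr (Eventually.of_forall fun x hx => ?_)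
    rw [Real.norm_eq_abs]
    exact hbound x hx
  have hInt2 : IntegrableOn g (Ioi 1) := by
    have h2 : IntegrableOn (fun x => f x / x ^ ((m:ℝ) + ν) -
        ∑ k ∈ Finset.range m, c k * x ^ ((k:ℝ) - m - ν)) (Ioi 1) := by
      refine (hint.mono Ioi_subset_Ici_self le_rfl).sub
        (integrable_finset_sum _ fun k hk => ?_)
      exact (integrableOn_Ioi_rpow_of_lt (hklt k hk) one_pos).const_mul _
    refine h2.congr_fun (fun x hx => ?_) measurableSet_Ioi
    exact (hgeq x (lt_trans one_pos hx)).symm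
  have hgi : IntegrableOn g (Ioi 0) := by
    rw [← Ioc_union_Ioi_eq_Ioi (zero_le_one (α := ℝ))]
    exact hInt1.union hInt2
  refine ⟨∫ x in Ioi (0:ℝ), g x, ?_, ?_⟩
  · -- ε → 0⁺ part
    have key : ∀ ε : ℝ, ε ∈ Ioo (0:ℝ) 1 →
        ∫ x in Ioi ε, g x = (∫ x in Ioi ε, f x / x ^ ((m:ℝ) + ν)) -
          ∑ k ∈ Finset.range m, c k * ε ^ ((k:ℝ) + 1 - m - ν) / ((m:ℝ) + ν - k - 1) := by
      rintro ε ⟨hε0, hε1⟩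
      have hfint : IntegrableOn (fun x => f x / x ^ ((m:ℝ) + ν)) (Ioi ε) := by
        rw [← Ioc_union_Ioi_eq_Ioi hε1.le]
        refine IntegrableOn.union ?_ (hint.mono Ioi_subset_Ici_self le_rfl)
        refine (ContinuousOn.integrableOn_Icc ?_).mono_set Ioc_subset_Icc_self
        refine ContinuousOn.div hfc.continuousOn ?_ ?_
        · exact fun x hx => (Real.continuousAt_rpow_const x _
            (Or.inl (ne_of_gt (lt_of_lt_of_le hε0 hx.1)))).continuousWithinAt
        · exact fun x hx => (Real.rpow_pos_of_pos (lt_of_lt_of_le hε0 hx.1) _).ne'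
      have hkint : ∀ k ∈ Finset.range m,
          IntegrableOn (fun x => c k * x ^ ((k:ℝ) - m - ν)) (Ioi ε) :=
        fun k hk => (integrableOn_Ioi_rpow_of_lt (hklt k hk) hε0).const_mul _
      have e1 : ∫ x in Ioi ε, g x = ∫ x in Ioi ε, (f x / x ^ ((m:ℝ) + ν) -
          ∑ k ∈ Finset.range m, c k * x ^ ((k:ℝ) - m - ν)) :=
        setIntegral_congr_fun measurableSet_Ioi fun x hx => hgeq x (hε0.trans hx)
      rw [e1, integral_sub hfint (integrable_finset_sum _ hkint),
        integral_finset_sum _ hkint]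
      congr 1
      refine Finset.sum_congr rfl fun k hk => ?_
      rw [MeasureTheory.integral_const_mul, integral_Ioi_rpow_of_lt (hklt k hk) hε0,
        show (k:ℝ) - m - ν + 1 = (k:ℝ) + 1 - m - ν by ring,
        show (m:ℝ) + ν - k - 1 = -((k:ℝ) + 1 - m - ν) by ring]
      rw [div_neg, neg_div, mul_neg, neg_inj, mul_div_assoc]
    refine Tendsto.congr' ?_ (fp_tendsto_aux g hgi)
    filter_upwards [Ioo_mem_nhdsGT_of_mem (by simp : (0:ℝ) ∈ Ico (0:ℝ) 1)] with ε hε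
    exact key ε hε
  · -- a → ∞ part
    have htd2 : Tendsto (fun a : ℝ => ∫ x in Ioc (0:ℝ) a, g x) atTop
        (nhds (∫ x in Ioi (0:ℝ), g x)) := by
      have h := MeasureTheory.intervalIntegral_tendsto_integral_Ioi 0 hgi tendsto_id
      refine Tendsto.congr' ?_ h
      filter_upwards [eventually_ge_atTop (0:ℝ)] with a ha
      simp only [id_eq]
      rw [intervalIntegral.integral_of_le ha]
    refine Tendsto.congr' ?_ htd2
    filter_upwards [eventually_ge_atTop (1:ℝ)] with a ha
    have ha0 : (0:ℝ) < a := lt_of_lt_of_le one_pos ha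
    have hI : ∀ r : ℝ, -1 < r → ∫ x in Ioc (0:ℝ) a, x ^ r = a ^ (r + 1) / (r + 1) := by
      intro r hr
      rw [← intervalIntegral.integral_of_le ha0.le, integral_rpow (Or.inl hr),
        Real.zero_rpow (by linarith : r + 1 ≠ 0)]
      ring
    have hjr : ∀ j : ℕ, (-1:ℝ) < (j:ℝ) - ν := by
      intro j
      have := Nat.cast_nonneg (α := ℝ) j
      linarith
    have hFint : ∀ j : ℕ, Integrable (fun x => c (m + j) * x ^ ((j:ℝ) - ν))
        ((volume : Measure ℝ).restrict (Ioc 0 a)) := fun j =>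
      ((intervalIntegral.intervalIntegrable_rpow' (hjr j)).1).const_mul _
    have hden : ∀ j : ℕ, (0:ℝ) < (j:ℝ) + 1 - ν := by
      intro j
      have := Nat.cast_nonneg (α := ℝ) j
      linarith
    have hFval : ∀ j : ℕ, ∫ x in Ioc (0:ℝ) a, c (m + j) * x ^ ((j:ℝ) - ν)
        = c (m + j) * a ^ ((j:ℝ) + 1 - ν) / ((j:ℝ) + 1 - ν) := by
      intro j
      rw [MeasureTheory.integral_const_mul, hI _ (hjr j),
        show (j:ℝ) - ν + 1 = (j:ℝ) + 1 - ν by ring, mul_div_assoc]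
    have hFnorm : ∀ j : ℕ, ∫ x in Ioc (0:ℝ) a, ‖c (m + j) * x ^ ((j:ℝ) - ν)‖
        = |c (m + j)| * a ^ ((j:ℝ) + 1 - ν) / ((j:ℝ) + 1 - ν) := by
      intro j
      rw [setIntegral_congr_fun measurableSet_Ioc (g := fun x => |c (m + j)| * x ^ ((j:ℝ) - ν))
        (fun x hx => by
          rw [Real.norm_eq_abs, abs_mul, abs_of_nonneg (Real.rpow_nonneg hx.1.le _)]),
        MeasureTheory.integral_const_mul, hI _ (hjr j),
        show (j:ℝ) - ν + 1 = (j:ℝ) + 1 - ν by ring, mul_div_assoc]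
    -- summability of the norms
    have hSa : Summable (fun j => |c (m + j)| * a ^ j) := by
      have S := (habs a ha0.le).comp_injective (add_right_injective m)
      refine ((S.mul_left ((a ^ m)⁻¹)).congr fun j => ?_)
      have ham : (a:ℝ) ^ m ≠ 0 := pow_ne_zero m ha0.ne'
      simp only [Function.comp_apply]
      field_simp [pow_add]
      ring
    have hsum2 : Summable (fun j => |c (m + j)| * a ^ ((j:ℝ) + 1 - ν) / ((j:ℝ) + 1 - ν)) := by
      refine Summable.of_nonneg_of_le (fun j => div_nonneg (mul_nonneg (abs_nonneg _)
        (Real.rpow_nonneg ha0.le _)) (hden j).le) (fun j => ?_)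
        ((hSa.mul_left (a / (1 - ν))))
      have hle1 : a ^ ((j:ℝ) + 1 - ν) ≤ a * a ^ j := by
        calc a ^ ((j:ℝ) + 1 - ν) ≤ a ^ ((j:ℝ) + 1) :=
              Real.rpow_le_rpow_of_exponent_le ha (by linarith)
          _ = a * a ^ j := by
              rw [show ((j:ℝ) + 1) = ((j + 1 : ℕ) : ℝ) by push_cast; ring,
                Real.rpow_natCast, pow_succ]
              ring
      have hle2 : 1 / ((j:ℝ) + 1 - ν) ≤ 1 / (1 - ν) := by
        apply one_div_le_one_div_of_le (by linarith)
        have := Nat.cast_nonneg (α := ℝ) j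
        linarith
      calc |c (m + j)| * a ^ ((j:ℝ) + 1 - ν) / ((j:ℝ) + 1 - ν)
          = |c (m + j)| * a ^ ((j:ℝ) + 1 - ν) * (1 / ((j:ℝ) + 1 - ν)) := by ring
        _ ≤ |c (m + j)| * (a * a ^ j) * (1 / (1 - ν)) := by
            refine mul_le_mul ?_ hle2 (one_div_nonneg.mpr (hden j).le)
              (mul_nonneg (abs_nonneg _) (mul_nonneg ha0.le (pow_nonneg ha0.le j)))
            exact mul_le_mul_of_nonneg_left hle1 (abs_nonneg _)
        _ = a / (1 - ν) * (|c (m + j)| * a ^ j) := by ring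
    have hswap := MeasureTheory.integral_tsum_of_summable_integral_norm hFint
      ((hsum2.congr fun j => (hFnorm j).symm))
    have e2 : ∫ x in Ioc (0:ℝ) a, (∑' j : ℕ, c (m + j) * x ^ ((j:ℝ) - ν)) =
        ∫ x in Ioc (0:ℝ) a, g x :=
      setIntegral_congr_fun measurableSet_Ioc fun x hx => (hgs x hx.1).tsum_eq
    symm
    calc (∑' j : ℕ, c (m + j) * a ^ ((j:ℝ) + 1 - ν) / ((j:ℝ) + 1 - ν))
        = ∑' j : ℕ, ∫ x in Ioc (0:ℝ) a, c (m + j) * x ^ ((j:ℝ) - ν) :=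
          tsum_congr fun j => (hFval j).symm
      _ = ∫ x in Ioc (0:ℝ) a, (∑' j : ℕ, c (m + j) * x ^ ((j:ℝ) - ν)) := hswap
      _ = ∫ x in Ioc (0:ℝ) a, g x := e2
end

section
/- For every integer m ≥ 1, every 0 < ν < 1 and every b > 0, the limit as ε → 0⁺ of [∫_ε^∞ e^{-bx} x^{-m-ν} dx − Σ_{k=0}^{m-1} ((-b)^k/k!) ε^{k+1-m-ν}/(m+ν-k-1)] exists and equals (-1)^m b^{m+ν-1} π/(sin(πν) Γ(m+ν)), where Γ is the Gamma function. -/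
/-!
Write `R_m(y) = e^y - ∑_{k<m} y^k/k!`. Integrating the subtracted monomials exactly turns the
regularized expression into `∫_ε^∞ R_m(-bx) x^{-m-ν} dx`. Since `|R_m(-bx)| ≤ (bx)^m` this integrand
is `O(x^{-ν})` at `0`, hence integrable on `(0, ∞)`, and the limit is the full integral `I_m`.
As `R_{m+1}' = R_m`, integration by parts gives `I_{m+1} = -b/(m+ν) · I_m`, while
`I_0 = b^{ν-1} Γ(1-ν)` is Euler's integral; so `I_m Γ(m+ν) = (-1)^m b^{m+ν-1} Γ(ν) Γ(1-ν)`, and the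
reflection formula `Γ(ν) Γ(1-ν) = π / sin(πν)` finishes.
-/

open Filter MeasureTheory Set Topology Real
open scoped Nat

theorem tendsto_setIntegral_Ioi_nhdsGT {E : Type*} [NormedAddCommGroup E] [NormedSpace ℝ E]
    {μ : Measure ℝ} [NullSingletonClass μ] {f : ℝ → E} {a : ℝ} (hf : IntegrableOn f (Ioi a) μ) :
    Tendsto (fun ε => ∫ x in Ioi ε, f x ∂μ) (𝓝[>] a) (𝓝 (∫ x in Ioi a, f x ∂μ)) := by
  have hprim : ContinuousWithinAt (fun ε => ∫ x in a..ε, f x ∂μ) (Icc a (a + 1)) a := by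
    refine intervalIntegral.continuousWithinAt_primitive (measure_singleton a) ?_
    rw [min_self, max_eq_right (by linarith)]
    exact (intervalIntegrable_iff_integrableOn_Ioc_of_le (by linarith)).2
      (hf.mono_set Ioc_subset_Ioi_self)
  have hlim := (hprim.mono_of_mem_nhdsWithin (Icc_mem_nhdsGT (by linarith))).tendsto
  rw [intervalIntegral.integral_same] at hlim
  refine (tendsto_const_nhds.sub hlim).congr' ?_ |>.trans (by rw [sub_zero])
  filter_upwards [self_mem_nhdsWithin] with ε (hε : a < ε)
  rw [← intervalIntegral.integral_Ioi_sub_Ioi hf hε.le, sub_sub_cancel]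

noncomputable def expRemainder (m : ℕ) (y : ℝ) : ℝ :=
  exp y - ∑ k ∈ Finset.range m, y ^ k / k !

theorem continuous_expRemainder (m : ℕ) : Continuous (expRemainder m) := by
  unfold expRemainder; fun_prop

theorem expRemainder_succ_zero (m : ℕ) : expRemainder (m + 1) 0 = 0 := by
  simp [expRemainder, Finset.sum_range_succ']

theorem hasDerivAt_expRemainder_succ (m : ℕ) (y : ℝ) :
    HasDerivAt (expRemainder (m + 1)) (expRemainder m y) y := by
  have hterm (k : ℕ) : HasDerivAt (fun y : ℝ => y ^ (k + 1) / (k + 1)!) (y ^ k / k !) y := by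
    refine ((hasDerivAt_pow (k + 1) y).div_const ((k + 1)! : ℝ)).congr_deriv ?_
    rw [Nat.factorial_succ]
    push_cast
    field_simp
  have hsum := HasDerivAt.fun_sum (u := Finset.range m) fun k _ => hterm k
  have hR : expRemainder (m + 1) =
      fun y => exp y - (∑ k ∈ Finset.range m, y ^ (k + 1) / (k + 1)! + 1) := by
    ext y; simp [expRemainder, Finset.sum_range_succ']
  rw [hR]
  exact (hasDerivAt_exp y).sub (hsum.add_const 1)

/-- Cruder than the Lagrange bound (no `m!`), but only the order `|y|^m` at `0` matters. -/
theorem abs_expRemainder_le {y : ℝ} (hy : y ≤ 0) (m : ℕ) : |expRemainder m y| ≤ |y| ^ m := by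
  induction m generalizing y with
  | zero => simpa [expRemainder, abs_of_pos (exp_pos y)] using hy
  | succ m ih =>
    have hmvt := norm_image_sub_le_of_norm_deriv_le_segment' (C := |y| ^ m)
      (fun t _ => (hasDerivAt_expRemainder_succ m t).hasDerivWithinAt)
      (fun t ht => (ih ht.2.le).trans
        (pow_le_pow_left₀ (abs_nonneg t) (abs_le_abs_of_nonpos ht.2.le ht.1) m))
      0 (right_mem_Icc.2 hy)
    rw [expRemainder_succ_zero, zero_sub, norm_neg, Real.norm_eq_abs, zero_sub,
      ← abs_of_nonpos hy] at hmvt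
    rwa [pow_succ]

theorem abs_expRemainder_neg_mul_mul_rpow_le {b x : ℝ} (hb : 0 ≤ b) (hx : 0 < x) (m : ℕ)
    (r : ℝ) : |expRemainder m (-b * x) * x ^ (-r)| ≤ b ^ m * x ^ ((m : ℝ) - r) := by
  have hbx : |-b * x| = b * x := by rw [neg_mul, abs_neg, abs_of_nonneg (by positivity)]
  calc |expRemainder m (-b * x) * x ^ (-r)| ≤ (b * x) ^ m * x ^ (-r) := by
        rw [abs_mul, abs_of_nonneg (rpow_nonneg hx.le _), ← hbx]
        gcongr
        exact abs_expRemainder_le (by nlinarith) m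
    _ = b ^ m * x ^ ((m : ℝ) - r) := by
        rw [sub_eq_add_neg, rpow_add hx, rpow_natCast, mul_pow, mul_assoc]

theorem expRemainder_neg_mul_mul_rpow {x : ℝ} (hx : 0 < x) (b r : ℝ) (m : ℕ) :
    expRemainder m (-b * x) * x ^ (-r) =
      exp (-b * x) * x ^ (-r) - ∑ k ∈ Finset.range m, (-b) ^ k / k ! * x ^ ((k : ℝ) - r) := by
  rw [expRemainder, sub_mul, Finset.sum_mul]
  congr 1
  refine Finset.sum_congr rfl fun k _ => ?_
  rw [sub_eq_add_neg, rpow_add hx, rpow_natCast, mul_pow]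
  ring

theorem tendsto_expRemainder_neg_mul_mul_rpow_atTop {b : ℝ} (hb : 0 < b) {m : ℕ} {r : ℝ}
    (hr : (m : ℝ) < r + 1) :
    Tendsto (fun x => expRemainder m (-b * x) * x ^ (-r)) atTop (𝓝 0) := by
  have hexp : Tendsto (fun x => exp (-b * x) * x ^ (-r)) atTop (𝓝 0) := by
    simpa only [mul_comm] using tendsto_rpow_mul_exp_neg_mul_atTop_nhds_zero (-r) b hb
  have hpow : ∀ k ∈ Finset.range m,
      Tendsto (fun x : ℝ => (-b) ^ k / k ! * x ^ ((k : ℝ) - r)) atTop (𝓝 0) := by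
    intro k hk
    have hkr : 0 < r - k := by
      have : (k : ℝ) + 1 ≤ m := by exact_mod_cast Finset.mem_range.1 hk
      linarith
    simpa using (tendsto_rpow_neg_atTop hkr).const_mul ((-b) ^ k / (k ! : ℝ))
  have hlim := hexp.sub (tendsto_finsetSum _ hpow)
  rw [Finset.sum_const_zero, sub_zero] at hlim
  refine hlim.congr' ?_
  filter_upwards [eventually_gt_atTop 0] with x hx
  exact (expRemainder_neg_mul_mul_rpow hx b r m).symm

theorem tendsto_expRemainder_neg_mul_mul_rpow_nhdsGT {b : ℝ} (hb : 0 ≤ b) {m : ℕ} {r : ℝ}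
    (hr : r < m) :
    Tendsto (fun x => expRemainder m (-b * x) * x ^ (-r)) (𝓝[>] 0) (𝓝 0) := by
  have hbound : Tendsto (fun x : ℝ => b ^ m * x ^ ((m : ℝ) - r)) (𝓝[>] 0) (𝓝 0) := by
    have := ((continuousAt_rpow_const 0 _ (Or.inr (sub_pos.2 hr).le)).tendsto.const_mul
      (b ^ m)).mono_left (nhdsWithin_le_nhds (s := Ioi 0))
    simpa [zero_rpow (sub_pos.2 hr).ne'] using this
  refine squeeze_zero_norm' ?_ hbound
  filter_upwards [self_mem_nhdsWithin] with x hx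
  exact abs_expRemainder_neg_mul_mul_rpow_le hb hx m r

theorem integrableOn_exp_neg_mul_mul_rpow_Ioi {b a r : ℝ} (hb : 0 < b) (ha : 0 < a)
    (hr : 0 ≤ r) : IntegrableOn (fun x => exp (-b * x) * x ^ (-r)) (Ioi a) := by
  refine ((exp_neg_integrableOn_Ioi a hb).mul_const (a ^ (-r))).mono' ?_ ?_
  · exact (by fun_prop : Continuous fun x => exp (-b * x)).aestronglyMeasurable.mul
      (by measurability : Measurable fun x : ℝ => x ^ (-r)).aestronglyMeasurable
  · filter_upwards [ae_restrict_mem measurableSet_Ioi] with x (hx : a < x)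
    rw [norm_mul, Real.norm_of_nonneg (exp_pos _).le,
      Real.norm_of_nonneg (rpow_nonneg (ha.trans hx).le _), neg_mul]
    exact mul_le_mul_of_nonneg_left (rpow_le_rpow_of_nonpos ha hx.le (neg_nonpos.2 hr))
      (exp_pos _).le

theorem integrableOn_rpow_sum_Ioi {a r : ℝ} (ha : 0 < a) (c : ℕ → ℝ) {m : ℕ}
    (hr : (m : ℝ) < r) :
    IntegrableOn (fun x => ∑ k ∈ Finset.range m, c k * x ^ ((k : ℝ) - r)) (Ioi a) := by
  refine integrable_finsetSum _ fun k hk => (integrableOn_Ioi_rpow_of_lt ?_ ha).const_mul _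
  have : (k : ℝ) + 1 ≤ m := by exact_mod_cast Finset.mem_range.1 hk
  linarith

theorem integrableOn_expRemainder_neg_mul_mul_rpow {b : ℝ} (hb : 0 < b) {m : ℕ} {r : ℝ}
    (hr₀ : (m : ℝ) < r) (hr₁ : r < m + 1) :
    IntegrableOn (fun x => expRemainder m (-b * x) * x ^ (-r)) (Ioi 0) := by
  rw [← Ioc_union_Ioi_eq_Ioi zero_le_one]
  refine IntegrableOn.union ?_ ?_
  · have hdom : IntegrableOn (fun x : ℝ => b ^ m * x ^ ((m : ℝ) - r)) (Ioc 0 1) := by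
      rw [← intervalIntegrable_iff_integrableOn_Ioc_of_le zero_le_one]
      exact (intervalIntegral.intervalIntegrable_rpow' (by linarith)).const_mul _
    refine hdom.mono' ?_ ?_
    · exact ((continuous_expRemainder m).comp (by fun_prop)).aestronglyMeasurable.mul
        (by measurability : Measurable fun x : ℝ => x ^ (-r)).aestronglyMeasurable
    · filter_upwards [ae_restrict_mem measurableSet_Ioc] with x hx
      exact abs_expRemainder_neg_mul_mul_rpow_le hb.le hx.1 m r
  · refine ((integrableOn_exp_neg_mul_mul_rpow_Ioi (r := r) hb one_pos
      ((Nat.cast_nonneg m).trans hr₀.le)).sub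
      (integrableOn_rpow_sum_Ioi one_pos (fun k => (-b) ^ k / k !) hr₀)).congr_fun
      (fun x hx => ?_) measurableSet_Ioi
    exact (expRemainder_neg_mul_mul_rpow (one_pos.trans hx) b r m).symm

theorem integral_expRemainder_succ_neg_mul_mul_rpow {b : ℝ} (hb : 0 < b) {m : ℕ} {r : ℝ}
    (hr₀ : (m : ℝ) < r) (hr₁ : r < m + 1) :
    ∫ x in Ioi 0, expRemainder (m + 1) (-b * x) * x ^ (-(r + 1)) =
      -(b / r) * ∫ x in Ioi 0, expRemainder m (-b * x) * x ^ (-r) := by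
  have hr : r ≠ 0 := ((Nat.cast_nonneg m).trans_lt hr₀).ne'
  have hu : ∀ x ∈ Ioi (0 : ℝ), HasDerivAt (fun x => expRemainder (m + 1) (-b * x))
      (-b * expRemainder m (-b * x)) x := fun x _ =>
    ((hasDerivAt_expRemainder_succ m (-b * x)).comp x
      ((hasDerivAt_id' x).const_mul (-b))).congr_deriv (by ring)
  have hv : ∀ x ∈ Ioi (0 : ℝ), HasDerivAt (fun x => x ^ (-r) / -r) (x ^ (-(r + 1))) x :=
    fun x hx => by
      refine ((hasDerivAt_rpow_const (Or.inl (ne_of_gt hx))).div_const (-r)).congr_deriv ?_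
      rw [show -r - 1 = -(r + 1) by ring]
      field_simp
  have huv' : IntegrableOn (fun x => expRemainder (m + 1) (-b * x) * x ^ (-(r + 1))) (Ioi 0) :=
    integrableOn_expRemainder_neg_mul_mul_rpow hb (by push_cast; linarith)
      (by push_cast; linarith)
  have hu'v : IntegrableOn (fun x => -b * expRemainder m (-b * x) * (x ^ (-r) / -r)) (Ioi 0) :=
    IntegrableOn.congr_fun
      ((integrableOn_expRemainder_neg_mul_mul_rpow hb hr₀ hr₁).const_mul (b / r))
      (fun x _ => by field_simp) measurableSet_Ioi
  have huv : ∀ l, Tendsto (fun x => expRemainder (m + 1) (-b * x) * x ^ (-r)) l (𝓝 0) →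
      Tendsto (fun x => expRemainder (m + 1) (-b * x) * (x ^ (-r) / -r)) l (𝓝 0) := fun l h => by
    simpa only [mul_div_assoc', zero_div] using h.div_const (-r)
  rw [integral_Ioi_mul_deriv_eq_deriv_mul hu hv huv' hu'v
    (huv _ (tendsto_expRemainder_neg_mul_mul_rpow_nhdsGT hb.le (by push_cast; linarith)))
    (huv _ (tendsto_expRemainder_neg_mul_mul_rpow_atTop hb (by push_cast; linarith))),
    ← integral_const_mul]
  rw [sub_self, zero_sub, ← integral_neg]
  refine setIntegral_congr_fun measurableSet_Ioi fun x _ => ?_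
  field_simp

theorem integral_expRemainder_zero_neg_mul_mul_rpow {b : ℝ} (hb : 0 < b) {ν : ℝ} (hν : ν < 1) :
    ∫ x in Ioi 0, expRemainder 0 (-b * x) * x ^ (-ν) = b ^ (ν - 1) * Gamma (1 - ν) := by
  have h := integral_rpow_mul_exp_neg_mul_Ioi (sub_pos.2 hν) hb
  rw [one_div, inv_rpow hb.le, ← rpow_neg hb.le, neg_sub] at h
  rw [← h]
  refine setIntegral_congr_fun measurableSet_Ioi fun x _ => ?_
  simp [expRemainder, mul_comm]

theorem integral_expRemainder_neg_mul_mul_rpow_mul_Gamma {b : ℝ} (hb : 0 < b) {ν : ℝ}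
    (hν₀ : 0 < ν) (hν₁ : ν < 1) (m : ℕ) :
    (∫ x in Ioi 0, expRemainder m (-b * x) * x ^ (-((m : ℝ) + ν))) * Gamma (m + ν) =
      (-1) ^ m * b ^ ((m : ℝ) + ν - 1) * (Gamma ν * Gamma (1 - ν)) := by
  induction m with
  | zero =>
    simp only [Nat.cast_zero, zero_add, pow_zero, one_mul,
      integral_expRemainder_zero_neg_mul_mul_rpow hb hν₁]
    ring
  | succ m ih =>
    have hr : (m : ℝ) + ν ≠ 0 := by positivity
    have hcast : ((m + 1 : ℕ) : ℝ) + ν = (m + ν) + 1 := by push_cast; ring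
    have hpow : b ^ ((m : ℝ) + ν) = b ^ ((m : ℝ) + ν - 1) * b := by
      rw [← rpow_add_one hb.ne', sub_add_cancel]
    rw [hcast, integral_expRemainder_succ_neg_mul_mul_rpow hb (by linarith) (by linarith),
      Gamma_add_one hr, add_sub_cancel_right, pow_succ, hpow]
    generalize (∫ x in Ioi 0, expRemainder m (-b * x) * x ^ (-((m : ℝ) + ν))) = I at ih ⊢
    calc -(b / (m + ν)) * I * ((m + ν) * Gamma (m + ν)) = -b * (I * Gamma (m + ν)) := by
          field_simp
      _ = _ := by rw [ih]; ring

theorem integral_expRemainder_neg_mul_mul_rpow {b : ℝ} (hb : 0 < b) {ν : ℝ} (hν₀ : 0 < ν)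
    (hν₁ : ν < 1) (m : ℕ) :
    ∫ x in Ioi 0, expRemainder m (-b * x) * x ^ (-((m : ℝ) + ν)) =
      (-1) ^ m * b ^ ((m : ℝ) + ν - 1) * π / (sin (π * ν) * Gamma (m + ν)) := by
  have hsin : sin (π * ν) ≠ 0 :=
    (sin_pos_of_pos_of_lt_pi (by positivity) (by nlinarith [pi_pos])).ne'
  have hΓ : Gamma (m + ν) ≠ 0 := (Gamma_pos_of_pos (by positivity)).ne'
  have h := integral_expRemainder_neg_mul_mul_rpow_mul_Gamma hb hν₀ hν₁ m
  rw [Gamma_mul_Gamma_one_sub, ← eq_div_iff hΓ] at h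
  rw [h]
  field_simp

theorem integral_Ioi_exp_neg_mul_div_rpow_sub {b ε ν : ℝ} (hb : 0 < b) (hε : 0 < ε)
    (hν : 0 < ν) (m : ℕ) :
    (∫ x in Ioi ε, exp (-b * x) / x ^ ((m : ℝ) + ν)) -
        ∑ k ∈ Finset.range m,
          ((-b) ^ k / k !) * ε ^ ((k : ℝ) + 1 - m - ν) / ((m : ℝ) + ν - k - 1) =
      ∫ x in Ioi ε, expRemainder m (-b * x) * x ^ (-((m : ℝ) + ν)) := by
  have hkr (k : ℕ) (hk : k ∈ Finset.range m) : (k : ℝ) - (m + ν) < -1 := by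
    have : (k : ℝ) + 1 ≤ m := by exact_mod_cast Finset.mem_range.1 hk
    linarith
  have hint (k : ℕ) (hk : k ∈ Finset.range m) :
      IntegrableOn (fun x => (-b) ^ k / k ! * x ^ ((k : ℝ) - (m + ν))) (Ioi ε) :=
    (integrableOn_Ioi_rpow_of_lt (hkr k hk) hε).const_mul _
  have hterm (k : ℕ) (hk : k ∈ Finset.range m) :
      ∫ x in Ioi ε, (-b) ^ k / k ! * x ^ ((k : ℝ) - (m + ν)) =
        (-b) ^ k / k ! * ε ^ ((k : ℝ) + 1 - m - ν) / ((m : ℝ) + ν - k - 1) := by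
    rw [integral_const_mul, integral_Ioi_rpow_of_lt (hkr k hk) hε,
      show (k : ℝ) - (m + ν) + 1 = k + 1 - m - ν by ring, neg_div, ← div_neg, neg_sub,
      mul_div_assoc]
    ring_nf
  calc (∫ x in Ioi ε, exp (-b * x) / x ^ ((m : ℝ) + ν)) - _
      = (∫ x in Ioi ε, exp (-b * x) * x ^ (-((m : ℝ) + ν))) -
          ∫ x in Ioi ε, ∑ k ∈ Finset.range m, (-b) ^ k / k ! * x ^ ((k : ℝ) - (m + ν)) := by
        rw [integral_finsetSum _ hint, Finset.sum_congr rfl hterm]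
        congr 1
        refine setIntegral_congr_fun measurableSet_Ioi fun x hx => ?_
        rw [rpow_neg (hε.trans hx).le, div_eq_mul_inv]
    _ = _ := by
        rw [← integral_sub (integrableOn_exp_neg_mul_mul_rpow_Ioi hb hε (by positivity))
          (integrable_finsetSum _ hint)]
        refine setIntegral_congr_fun measurableSet_Ioi fun x hx => ?_
        exact (expRemainder_neg_mul_mul_rpow (hε.trans hx) b _ m).symm

theorem stmt_5_general (m : ℕ) (ν : ℝ) (hν0 : 0 < ν) (hν1 : ν < 1)
    (b : ℝ) (hb : 0 < b) :
    Tendsto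
      (fun ε : ℝ =>
        (∫ x in Set.Ioi ε, Real.exp (-b * x) / x ^ ((m : ℝ) + ν)) -
          ∑ k ∈ Finset.range m,
            ((-b) ^ k / Nat.factorial k) *
              ε ^ ((k : ℝ) + 1 - m - ν) / ((m : ℝ) + ν - k - 1))
      (nhdsWithin 0 (Set.Ioi 0))
      (nhds ((-1 : ℝ) ^ m * b ^ ((m : ℝ) + ν - 1) * Real.pi /
        (Real.sin (Real.pi * ν) * Real.Gamma ((m : ℝ) + ν)))) := by
  rw [← integral_expRemainder_neg_mul_mul_rpow hb hν0 hν1 m]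
  refine (tendsto_setIntegral_Ioi_nhdsGT (integrableOn_expRemainder_neg_mul_mul_rpow hb
    (by linarith) (by linarith))).congr' ?_
  filter_upwards [self_mem_nhdsWithin] with ε hε
  exact (integral_Ioi_exp_neg_mul_div_rpow_sub hb hε hν0 m).symm

/-- Finite part of `∫_0^∞ e^{-bx}/x^{m+ν} dx`, `0 < ν < 1`: the regularized limit exists
and equals `(-1)^m b^{m+ν-1} π/(sin(πν) Γ(m+ν))`. -/
theorem stmt_5 (m : ℕ) (hm : 1 ≤ m) (ν : ℝ) (hν0 : 0 < ν) (hν1 : ν < 1)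
    (b : ℝ) (hb : 0 < b) :
    Tendsto
      (fun ε : ℝ =>
        (∫ x in Set.Ioi ε, Real.exp (-b * x) / x ^ ((m : ℝ) + ν)) -
          ∑ k ∈ Finset.range m,
            ((-b) ^ k / Nat.factorial k) *
              ε ^ ((k : ℝ) + 1 - m - ν) / ((m : ℝ) + ν - k - 1))
      (nhdsWithin 0 (Set.Ioi 0))
      (nhds ((-1 : ℝ) ^ m * b ^ ((m : ℝ) + ν - 1) * Real.pi /
        (Real.sin (Real.pi * ν) * Real.Gamma ((m : ℝ) + ν)))) :=
  stmt_5_general m ν hν0 hν1 b hb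
end

section
/- Let F : ℂ → ℂ be entire with F real-valued on the real axis, let f be its restriction to ℝ with Taylor coefficients c_k = F^{(k)}(0)/k!, let m ≥ 1 be an integer and a > 0. Then the finite part integral ⨍_0^a f(x)/x^m dx, defined as the limit as ε → 0⁺ of [∫_ε^a f(x) x^{-m} dx − (Σ_{k=0}^{m-2} c_k/((m-k-1) ε^{m-k-1}) − c_{m-1} ln ε)], equals the contour integral (1/(2π a^{m-1})) ∫_0^{2π} F(a e^{iθ}) (ln a + i(θ − π)) e^{i(1-m)θ} dθ; in particular this integral is real. -/
/-!
Write `F = ∑ cₖ zᵏ`. Both sides are linear in the coefficients, and the monomial `zᵏ`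
contributes `cₖ · ⨍₀ᵃ x^(k-m) dx = cₖ · finitePartZPow a (k + 1 - m)` to each of them.
On the real side, `f(x)/xᵐ` is the sum of the singular terms `cₖ x^(k-m)`, `k < m`, whose
divergent parts are exactly the subtracted counterterms, and of the tail `∑ⱼ c_(m+j) xʲ`,
which is continuous at `0`. On the circle `z = a e^(iθ)`, the factor `log a + i(θ - π)` is
`log z - πi` and `∫₀^(2π) e^(inθ) (log a + i(θ - π)) dθ` is `2π log a` for `n = 0` and `2π/n`
otherwise. Summing over `k` is justified by dominated convergence on both sides.
-/

open Filter MeasureTheory Set Complex Topology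

/-- The Hadamard finite part of `∫₀ᵃ x ^ (n - 1) dx`. -/
noncomputable def finitePartZPow (a : ℝ) (n : ℤ) : ℝ :=
  if n = 0 then Real.log a else a ^ n / n

lemma integral_zpow_sub_one {ε a : ℝ} (hε : 0 < ε) (ha : 0 < a) (n : ℤ) :
    ∫ x in ε..a, x ^ (n - 1) = finitePartZPow a n - finitePartZPow ε n := by
  rcases eq_or_ne n 0 with rfl | hn
  · simp [finitePartZPow, integral_inv_of_pos hε ha, Real.log_div ha.ne' hε.ne']
  · rw [integral_zpow (Or.inr ⟨by omega, notMem_uIcc_of_lt hε ha⟩)]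
    simp [finitePartZPow, hn, sub_div]

lemma sum_range_mul_finitePartZPow {m : ℕ} (hm : 1 ≤ m) (c : ℕ → ℝ) (ε : ℝ) :
    ∑ k ∈ Finset.range m, c k * finitePartZPow ε ((k : ℤ) + 1 - m) =
      c (m - 1) * Real.log ε -
        ∑ k ∈ Finset.range (m - 1), c k / (((m - k - 1 : ℕ) : ℝ) * ε ^ (m - k - 1)) := by
  obtain ⟨M, rfl⟩ : ∃ M, m = M + 1 := ⟨m - 1, by omega⟩
  rw [Finset.sum_range_succ, add_tsub_cancel_right, add_comm, sub_eq_add_neg (c M * _),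
    ← Finset.sum_neg_distrib]
  congr 1
  · simp [finitePartZPow]
  · refine Finset.sum_congr rfl fun k hk => ?_
    have hkM : k < M := Finset.mem_range.mp hk
    have hn : (k : ℤ) + 1 - (M + 1 : ℕ) = -((M - k : ℕ) : ℤ) := by omega
    rw [hn, finitePartZPow, if_neg (by omega), zpow_neg, zpow_natCast,
      show M + 1 - k - 1 = M - k by omega]
    push_cast
    rw [Nat.cast_sub hkM.le]
    field_simp

lemma hasSum_intervalIntegral_of_summable_bound {ι E : Type*} [Countable ι]
    [NormedAddCommGroup E] [NormedSpace ℝ E] {f : ι → ℝ → E} {g : ℝ → E} {a b : ℝ}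
    {B : ι → ℝ} (hf : ∀ i, ContinuousOn (f i) (uIcc a b)) (hB : Summable B)
    (hbound : ∀ i, ∀ x ∈ uIcc a b, ‖f i x‖ ≤ B i)
    (hg : ∀ x ∈ uIcc a b, HasSum (fun i => f i x) (g x)) :
    HasSum (fun i => ∫ x in a..b, f i x) (∫ x in a..b, g x) :=
  intervalIntegral.hasSum_integral_of_dominated_convergence (fun i _ => B i)
    (fun i => ((hf i).aestronglyMeasurable measurableSet_uIcc).mono_set uIoc_subset_uIcc)
    (fun i => ae_of_all _ fun x hx => hbound i x (uIoc_subset_uIcc hx))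
    (ae_of_all _ fun _ _ => hB) intervalIntegrable_const
    (ae_of_all _ fun x hx => hg x (uIoc_subset_uIcc hx))

noncomputable def tailSeries (c : ℕ → ℝ) (m : ℕ) (x : ℝ) : ℝ :=
  ∑' j, c (m + j) * x ^ j

section RealPowerSeries

variable {c : ℕ → ℝ} {f : ℝ → ℝ}

lemma summable_abs_coeff_add_mul_pow (hf : ∀ x, HasSum (fun k => c k * x ^ k) (f x)) (m : ℕ)
    {r : ℝ} (hr : 0 ≤ r) : Summable fun j => |c (m + j)| * r ^ j := by
  have h := (summable_nat_add_iff m).mpr (hf (r + 1)).summable.abs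
  refine h.of_nonneg_of_le (fun j => by positivity) fun j => ?_
  rw [abs_mul, abs_pow, abs_of_pos (show 0 < r + 1 by linarith), add_comm j m]
  refine mul_le_mul_of_nonneg_left ?_ (abs_nonneg _)
  calc r ^ j ≤ (r + 1) ^ j := by gcongr; linarith
    _ ≤ (r + 1) ^ (m + j) := pow_le_pow_right₀ (by linarith) (by omega)

lemma hasSum_tailSeries (hf : ∀ x, HasSum (fun k => c k * x ^ k) (f x)) (m : ℕ) (x : ℝ) :
    HasSum (fun j => c (m + j) * x ^ j) (tailSeries c m x) :=
  ((summable_abs_coeff_add_mul_pow hf m (abs_nonneg x)).of_norm_bounded fun j => by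
    rw [norm_mul, norm_pow, Real.norm_eq_abs, Real.norm_eq_abs]).hasSum

lemma continuous_tailSeries (hf : ∀ x, HasSum (fun k => c k * x ^ k) (f x)) (m : ℕ) :
    Continuous (tailSeries c m) := by
  refine continuous_iff_continuousAt.2 fun x => ?_
  have hR : 0 ≤ |x| + 1 := by positivity
  have hcont : ContinuousOn (tailSeries c m) (Ioo (-(|x| + 1)) (|x| + 1)) :=
    continuousOn_tsum (fun j => (continuous_const.mul (continuous_pow j)).continuousOn)
      (summable_abs_coeff_add_mul_pow hf m hR) fun j y hy => by
        rw [norm_mul, norm_pow, Real.norm_eq_abs, Real.norm_eq_abs]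
        gcongr
        exact (abs_lt.2 hy).le
  exact hcont.continuousAt
    (Ioo_mem_nhds (by linarith [neg_abs_le x]) (by linarith [le_abs_self x]))

lemma eq_sum_add_pow_mul_tailSeries (hf : ∀ x, HasSum (fun k => c k * x ^ k) (f x))
    (m : ℕ) (x : ℝ) :
    f x = ∑ k ∈ Finset.range m, c k * x ^ k + x ^ m * tailSeries c m x := by
  have h := ((hasSum_nat_add_iff' m).2 (hf x)).unique
    (((hasSum_tailSeries hf m x).mul_left (x ^ m)).congr_fun fun j => by ring_nf)
  linarith

lemma div_pow_eq_sum_add_tailSeries (hf : ∀ x, HasSum (fun k => c k * x ^ k) (f x))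
    (m : ℕ) {x : ℝ} (hx : x ≠ 0) :
    f x / x ^ m = ∑ k ∈ Finset.range m, c k * x ^ ((k : ℤ) + 1 - m - 1) + tailSeries c m x := by
  rw [eq_sum_add_pow_mul_tailSeries hf m x, add_div, Finset.sum_div,
    mul_div_cancel_left₀ _ (pow_ne_zero m hx)]
  congr 1
  refine Finset.sum_congr rfl fun k _ => ?_
  rw [mul_div_assoc, ← zpow_natCast, ← zpow_natCast, ← zpow_sub₀ hx]
  ring_nf

lemma integral_div_pow_eq (hf : ∀ x, HasSum (fun k => c k * x ^ k) (f x)) (m : ℕ)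
    {ε a : ℝ} (hε : 0 < ε) (ha : 0 < a) :
    ∫ x in ε..a, f x / x ^ m =
      ∑ k ∈ Finset.range m, c k * (finitePartZPow a ((k : ℤ) + 1 - m) -
        finitePartZPow ε ((k : ℤ) + 1 - m)) + ∫ x in ε..a, tailSeries c m x := by
  have h0 : (0 : ℝ) ∉ uIcc ε a := notMem_uIcc_of_lt hε ha
  have hzpow : ∀ n : ℤ, ContinuousOn (fun x : ℝ => x ^ n) (uIcc ε a) := fun n x hx =>
    (continuousAt_zpow₀ x n (Or.inl fun h => h0 (h ▸ hx))).continuousWithinAt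
  have hterm : ∀ k : ℕ, IntervalIntegrable (fun x : ℝ => c k * x ^ ((k : ℤ) + 1 - m - 1))
      volume ε a := fun k => (continuousOn_const.mul (hzpow _)).intervalIntegrable
  rw [intervalIntegral.integral_congr fun x hx =>
      div_pow_eq_sum_add_tailSeries hf m fun h => h0 (h ▸ hx),
    intervalIntegral.integral_add
      (ContinuousOn.intervalIntegrable (continuousOn_finsetSum _
        (f := fun k (x : ℝ) => c k * x ^ ((k : ℤ) + 1 - m - 1)) fun k _ =>
          continuousOn_const.mul (hzpow _)))
      ((continuous_tailSeries hf m).intervalIntegrable _ _),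
    intervalIntegral.integral_finsetSum fun k _ => hterm k]
  simp only [intervalIntegral.integral_const_mul, integral_zpow_sub_one hε ha]

lemma hasSum_coeff_mul_finitePartZPow (hf : ∀ x, HasSum (fun k => c k * x ^ k) (f x))
    (m : ℕ) {a : ℝ} (ha : 0 ≤ a) :
    HasSum (fun k => c k * finitePartZPow a ((k : ℤ) + 1 - m))
      (∑ k ∈ Finset.range m, c k * finitePartZPow a ((k : ℤ) + 1 - m) +
        ∫ x in (0 : ℝ)..a, tailSeries c m x) := by
  have h := hasSum_intervalIntegral_of_summable_bound (a := 0) (b := a)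
    (f := fun j x => c (m + j) * x ^ j)
    (fun j => (continuous_const.mul (continuous_pow j)).continuousOn)
    (summable_abs_coeff_add_mul_pow hf m ha)
    (fun j x hx => by
      rw [uIcc_of_le ha] at hx
      rw [norm_mul, norm_pow, Real.norm_eq_abs, Real.norm_eq_abs, abs_of_nonneg hx.1]
      exact mul_le_mul_of_nonneg_left (pow_le_pow_left₀ hx.1 hx.2 j) (abs_nonneg _))
    fun x _ => hasSum_tailSeries hf m x
  refine (hasSum_nat_add_iff' m).1 ?_
  rw [add_sub_cancel_left]
  refine h.congr_fun fun j => Eq.symm ?_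
  rw [intervalIntegral.integral_const_mul, integral_pow, finitePartZPow, if_neg (by omega),
    add_comm j m, show ((m + j : ℕ) : ℤ) + 1 - m = ((j + 1 : ℕ) : ℤ) by push_cast; ring,
    zpow_natCast]
  push_cast
  ring

lemma tendsto_finitePart_integral_div_pow (hf : ∀ x, HasSum (fun k => c k * x ^ k) (f x))
    {m : ℕ} (hm : 1 ≤ m) {a : ℝ} (ha : 0 < a) :
    Tendsto (fun ε : ℝ => (∫ x in ε..a, f x / x ^ m) -
        ((∑ k ∈ Finset.range (m - 1), c k / (((m - k - 1 : ℕ) : ℝ) * ε ^ (m - k - 1))) -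
          c (m - 1) * Real.log ε))
      (𝓝[>] 0)
      (𝓝 (∑ k ∈ Finset.range m, c k * finitePartZPow a ((k : ℤ) + 1 - m) +
        ∫ x in (0 : ℝ)..a, tailSeries c m x)) := by
  have hprim : Continuous fun ε => ∫ x in ε..a, tailSeries c m x := by
    simp_rw [intervalIntegral.integral_symm a]
    exact (intervalIntegral.continuous_primitive
      (fun _ _ => (continuous_tailSeries hf m).intervalIntegrable _ _) a).neg
  refine (tendsto_const_nhds.add ((hprim.tendsto 0).mono_left nhdsWithin_le_nhds)).congr' ?_
  filter_upwards [self_mem_nhdsWithin] with ε hε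
  rw [integral_div_pow_eq hf m hε ha, Finset.sum_congr rfl fun k _ => mul_sub _ _ _,
    Finset.sum_sub_distrib, sum_range_mul_finitePartZPow hm c ε]
  ring

end RealPowerSeries

lemma hasSum_intervalIntegral_pow_mul {F : ℂ → ℂ} {c : ℕ → ℂ}
    (hF : ∀ z, HasSum (fun k => c k * z ^ k) (F z)) {γ φ : ℝ → ℂ}
    (hγ : Continuous γ) (hφ : Continuous φ) (a b : ℝ) :
    HasSum (fun k => ∫ t in a..b, c k * γ t ^ k * φ t) (∫ t in a..b, F (γ t) * φ t) := by
  obtain ⟨R, hR⟩ := isCompact_uIcc.exists_bound_of_continuousOn hγ.continuousOn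
  obtain ⟨C, hC⟩ := isCompact_uIcc.exists_bound_of_continuousOn hφ.continuousOn
  have hsum : Summable fun k => ‖c k‖ * |R| ^ k * C := by
    refine (summable_norm_iff.2 (hF ((|R| : ℝ) : ℂ)).summable |>.mul_right C).congr fun k => ?_
    rw [norm_mul, norm_pow, Complex.norm_real, Real.norm_eq_abs, abs_abs]
  refine hasSum_intervalIntegral_of_summable_bound (fun k => by fun_prop) hsum
    (fun k t ht => ?_) fun t _ => (hF (γ t)).mul_right (φ t)
  rw [norm_mul, norm_mul, norm_pow]
  gcongr
  · exact (hR t ht).trans (le_abs_self R)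
  · exact hC t ht

lemma integral_logKernel (w : ℂ) :
    ∫ θ in (0 : ℝ)..2 * Real.pi, (w + I * ((θ : ℂ) - Real.pi)) = 2 * Real.pi * w := by
  have hderiv : ∀ θ : ℝ, HasDerivAt (fun t : ℝ => w * t + I * ((t : ℂ) - Real.pi) ^ 2 / 2)
      (w + I * ((θ : ℂ) - Real.pi)) θ := by
    intro θ
    refine ((((hasDerivAt_id (θ : ℂ)).const_mul w).add
      ((((hasDerivAt_id (θ : ℂ)).sub_const (Real.pi : ℂ)).pow 2).const_mul I
        |>.div_const 2)).comp_ofReal).congr_deriv ?_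
    simp only [id]
    ring
  rw [intervalIntegral.integral_eq_sub_of_hasDerivAt (fun θ _ => hderiv θ)
    ((by fun_prop : Continuous _).intervalIntegrable _ _)]
  push_cast
  ring

lemma integral_exp_mul_logKernel {n : ℤ} (hn : n ≠ 0) (w : ℂ) :
    ∫ θ in (0 : ℝ)..2 * Real.pi, exp (n * (θ * I)) * (w + I * ((θ : ℂ) - Real.pi)) =
      2 * Real.pi / n := by
  have hν : (n : ℂ) * I ≠ 0 := mul_ne_zero (Int.cast_ne_zero.2 hn) I_ne_zero
  have hderiv : ∀ θ : ℝ, HasDerivAt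
      (fun t : ℝ =>
        exp (n * (t * I)) * ((w + I * ((t : ℂ) - Real.pi)) / (n * I) - I / (n * I) ^ 2))
      (exp (n * (θ * I)) * (w + I * ((θ : ℂ) - Real.pi))) θ := by
    intro θ
    have h1 : HasDerivAt (fun t : ℝ => (n : ℂ) * (t * I)) (n * I) θ := by
      simpa using ((hasDerivAt_id (θ : ℂ)).mul_const I |>.const_mul (n : ℂ)).comp_ofReal
    have h2 : HasDerivAt (fun t : ℝ => (w + I * ((t : ℂ) - Real.pi)) / (n * I) - I / (n * I) ^ 2)
        (I / (n * I)) θ := by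
      simpa using ((((hasDerivAt_id (θ : ℂ)).sub_const (Real.pi : ℂ)).const_mul I).const_add w
        |>.div_const ((n : ℂ) * I) |>.sub_const (I / (n * I) ^ 2)).comp_ofReal
    refine (h1.cexp.mul h2).congr_deriv ?_
    field_simp
    ring
  rw [intervalIntegral.integral_eq_sub_of_hasDerivAt (fun θ _ => hderiv θ)
    ((by fun_prop : Continuous _).intervalIntegrable _ _)]
  have h2pi : exp (n * (((2 * Real.pi : ℝ) : ℂ) * I)) = 1 := by
    rw [← exp_int_mul_two_pi_mul_I n]; push_cast; ring_nf
  simp only [h2pi, ofReal_zero, zero_mul, mul_zero, exp_zero]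
  field_simp
  push_cast
  ring

lemma integral_circle_zpow_mul_logKernel (a : ℝ) (n : ℤ) :
    ∫ θ in (0 : ℝ)..2 * Real.pi,
        ((a : ℂ) * exp (θ * I)) ^ n * ((Real.log a : ℂ) + I * ((θ : ℂ) - Real.pi)) =
      2 * Real.pi * finitePartZPow a n := by
  simp_rw [mul_zpow, ← exp_int_mul, mul_assoc ((a : ℂ) ^ n), intervalIntegral.integral_const_mul]
  rcases eq_or_ne n 0 with rfl | hn
  · simp [integral_logKernel, finitePartZPow]
  · rw [integral_exp_mul_logKernel hn, finitePartZPow, if_neg hn]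
    push_cast
    ring

lemma circle_pow_mul_exp_eq_zpow {a : ℝ} (ha : a ≠ 0) {m : ℕ} (hm : 1 ≤ m) (k : ℕ) (θ : ℝ) :
    ((a : ℂ) * exp (θ * I)) ^ k * exp ((1 - m) * θ * I) =
      (a : ℂ) ^ (m - 1) * ((a : ℂ) * exp (θ * I)) ^ ((k : ℤ) + 1 - m) := by
  have hz : (a : ℂ) * exp (θ * I) ≠ 0 := mul_ne_zero (ofReal_ne_zero.2 ha) (exp_ne_zero _)
  rw [show (1 - m : ℂ) * θ * I = -(((m - 1 : ℕ) : ℂ) * (θ * I)) by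
      push_cast [Nat.cast_sub hm]; ring,
    exp_neg, exp_nat_mul, show (k : ℤ) + 1 - m = k + -((m - 1 : ℕ) : ℤ) by omega,
    zpow_add₀ hz, zpow_neg, zpow_natCast, zpow_natCast]
  field_simp
  rw [mul_pow]
  ring

lemma integral_circle_pow_mul_logKernel_mul_exp {a : ℝ} (ha : 0 < a) {m : ℕ} (hm : 1 ≤ m)
    (c : ℝ) (k : ℕ) :
    ∫ θ in (0 : ℝ)..2 * Real.pi, (c : ℂ) * ((a : ℂ) * exp (θ * I)) ^ k *
        (((Real.log a : ℂ) + I * ((θ : ℂ) - Real.pi)) * exp ((1 - m) * θ * I)) =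
      2 * Real.pi * (a : ℂ) ^ (m - 1) * ((c * finitePartZPow a ((k : ℤ) + 1 - m) : ℝ) : ℂ) := by
  calc _ = ∫ θ in (0 : ℝ)..2 * Real.pi, (c : ℂ) * (a : ℂ) ^ (m - 1) *
        (((a : ℂ) * exp (θ * I)) ^ ((k : ℤ) + 1 - m) *
          ((Real.log a : ℂ) + I * ((θ : ℂ) - Real.pi))) :=
        intervalIntegral.integral_congr fun θ _ => by
          linear_combination ((c : ℂ) * ((Real.log a : ℂ) + I * ((θ : ℂ) - Real.pi))) *
            circle_pow_mul_exp_eq_zpow ha.ne' hm k θ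
    _ = _ := by
      rw [intervalIntegral.integral_const_mul, integral_circle_zpow_mul_logKernel]
      push_cast
      ring

theorem stmt_6_general (F : ℂ → ℂ) (hF : Differentiable ℂ F)
    (f : ℝ → ℝ) (hf : ∀ x : ℝ, f x = (F x).re)
    (c : ℕ → ℝ) (hc : ∀ k, (c k : ℂ) = iteratedDeriv k F 0 / (Nat.factorial k))
    (m : ℕ) (hm : 1 ≤ m) (a : ℝ) (ha : 0 < a) :
    ∃ L : ℝ,
      Tendsto
        (fun ε : ℝ =>
          (∫ x in ε..a, f x / x ^ m) -
            ((∑ k ∈ Finset.range (m - 1),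
                c k / (((m - k - 1 : ℕ) : ℝ) * ε ^ (m - k - 1))) -
              c (m - 1) * Real.log ε))
        (nhdsWithin 0 (Set.Ioi 0)) (nhds L) ∧
      (L : ℂ) = (1 / (2 * (Real.pi : ℂ) * (a : ℂ) ^ (m - 1))) *
        ∫ θ in (0 : ℝ)..(2 * Real.pi),
          F ((a : ℂ) * Complex.exp ((θ : ℂ) * Complex.I)) *
            ((Real.log a : ℂ) + Complex.I * ((θ : ℂ) - (Real.pi : ℂ))) *
            Complex.exp ((1 - (m : ℂ)) * (θ : ℂ) * Complex.I) := by
  have hFc : ∀ z, HasSum (fun k => (c k : ℂ) * z ^ k) (F z) := fun z => by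
    simpa [hc, div_eq_inv_mul, mul_comm, mul_left_comm] using
      hasSum_taylorSeries_of_entire hF 0 z
  have hfc : ∀ x : ℝ, HasSum (fun k => c k * x ^ k) (f x) := fun x => by
    simpa [hf, ← ofReal_pow] using reCLM.hasSum (hFc x)
  refine ⟨_, tendsto_finitePart_integral_div_pow hfc hm ha, ?_⟩
  have hmodes := hasSum_intervalIntegral_pow_mul hFc (γ := fun θ : ℝ => (a : ℂ) * exp (θ * I))
    (φ := fun θ : ℝ => ((Real.log a : ℂ) + I * ((θ : ℂ) - Real.pi)) * exp ((1 - m) * θ * I))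
    (by fun_prop) (by fun_prop) 0 (2 * Real.pi)
  simp only [integral_circle_pow_mul_logKernel_mul_exp ha hm] at hmodes
  have hL := (hasSum_ofReal.2 (hasSum_coeff_mul_finitePartZPow hfc m ha.le)).mul_left
    (2 * Real.pi * (a : ℂ) ^ (m - 1))
  rw [intervalIntegral.integral_congr fun θ _ => mul_assoc _ _ _, hmodes.unique hL]
  have hpow : (a : ℂ) ^ (m - 1) ≠ 0 := pow_ne_zero _ (ofReal_ne_zero.2 ha.ne')
  field_simp

/-- Contour integral representation of the finite part integral `⨍_0^a f(x)/x^m dx`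
for an entire `F` that is real on the real axis: the regularized limit exists and,
viewed as a complex number, equals
`(1/(2π a^{m-1})) ∫_0^{2π} F(a e^{iθ})(ln a + i(θ−π)) e^{i(1−m)θ} dθ`. -/
theorem stmt_6 (F : ℂ → ℂ) (hF : Differentiable ℂ F)
    (hreal : ∀ x : ℝ, (F x).im = 0)
    (f : ℝ → ℝ) (hf : ∀ x : ℝ, f x = (F x).re)
    (c : ℕ → ℝ) (hc : ∀ k, (c k : ℂ) = iteratedDeriv k F 0 / (Nat.factorial k))
    (m : ℕ) (hm : 1 ≤ m) (a : ℝ) (ha : 0 < a) :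
    ∃ L : ℝ,
      Tendsto
        (fun ε : ℝ =>
          (∫ x in ε..a, f x / x ^ m) -
            ((∑ k ∈ Finset.range (m - 1),
                c k / (((m - k - 1 : ℕ) : ℝ) * ε ^ (m - k - 1))) -
              c (m - 1) * Real.log ε))
        (nhdsWithin 0 (Set.Ioi 0)) (nhds L) ∧
      (L : ℂ) = (1 / (2 * (Real.pi : ℂ) * (a : ℂ) ^ (m - 1))) *
        ∫ θ in (0 : ℝ)..(2 * Real.pi),
          F ((a : ℂ) * Complex.exp ((θ : ℂ) * Complex.I)) *
            ((Real.log a : ℂ) + Complex.I * ((θ : ℂ) - (Real.pi : ℂ))) *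
            Complex.exp ((1 - (m : ℂ)) * (θ : ℂ) * Complex.I) :=
  stmt_6_general F hF f hf c hc m hm a ha
end

section
/- Let f : ℝ → ℝ admit an entire complex extension and let a > 0. Then the limit as ω → 0⁺ of (∫_0^a f(x)/(ω + x) dx)/(-ln ω) exists and equals f(0). In particular, if f(0) ≠ 0, then ∫_0^a f(x)/(ω + x) dx ~ -f(0) ln ω as ω → 0⁺. -/
/-!
Split `∫₀ᵃ f x / (ω + x) dx = ∫₀ᵃ (f x - f 0) / (ω + x) dx + f 0 * (log (ω + a) - log ω)`.
Since `f` is differentiable at `0`, `dslope f 0` is bounded on `[0, a]` by compactness, i.e.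
`|f x - f 0| ≤ C x`; hence the first integral stays below `C a`. After division by `-log ω → ∞`
only `f 0` survives.
-/

open Filter MeasureTheory Set Topology

lemma exists_abs_sub_le_mul_of_differentiableAt {f : ℝ → ℝ} {a : ℝ}
    (hf : ContinuousOn f (Icc 0 a)) (hf0 : DifferentiableAt ℝ f 0) :
    ∃ C, ∀ x ∈ Icc 0 a, |f x - f 0| ≤ C * x := by
  have hslope : ContinuousOn (dslope f 0) (Icc 0 a) := fun x hx => by
    rcases eq_or_ne x 0 with rfl | hx0
    · exact (continuousAt_dslope_same.2 hf0).continuousWithinAt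
    · exact (continuousWithinAt_dslope_of_ne hx0).2 (hf x hx)
  obtain ⟨C, hC⟩ := isCompact_Icc.exists_bound_of_continuousOn hslope
  refine ⟨C, fun x hx => ?_⟩
  rw [← sub_smul_dslope f 0 x, sub_zero, smul_eq_mul, abs_mul, abs_of_nonneg hx.1, mul_comm]
  exact mul_le_mul_of_nonneg_right (hC x hx) hx.1

lemma integral_inv_add_left {ω a : ℝ} (hω : 0 < ω) (ha : 0 ≤ a) :
    ∫ x in (0 : ℝ)..a, (ω + x)⁻¹ = Real.log (ω + a) - Real.log ω := by
  rw [intervalIntegral.integral_comp_add_left (fun t => t⁻¹) ω, add_zero,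
    integral_inv_of_pos hω (by linarith), Real.log_div (by linarith) hω.ne']

lemma integral_div_add_eq {f : ℝ → ℝ} {a ω : ℝ} (ha : 0 ≤ a) (hω : 0 < ω)
    (hf : ContinuousOn f (Icc 0 a)) :
    ∫ x in (0 : ℝ)..a, f x / (ω + x) =
      (∫ x in (0 : ℝ)..a, (f x - f 0) / (ω + x)) + f 0 * (Real.log (ω + a) - Real.log ω) := by
  rw [uIcc_of_le ha |>.symm] at hf
  have hden : ∀ x ∈ uIcc 0 a, ω + x ≠ 0 := fun x hx => by
    rw [uIcc_of_le ha] at hx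
    linarith [hx.1]
  have hint : IntervalIntegrable (fun x => (f x - f 0) / (ω + x)) volume 0 a :=
    ((hf.sub continuousOn_const).div (by fun_prop) hden).intervalIntegrable
  have hinv : IntervalIntegrable (fun x => f 0 * (ω + x)⁻¹) volume 0 a :=
    (continuousOn_const.mul ((continuousOn_const.add continuousOn_id).inv₀ hden)).intervalIntegrable
  rw [← integral_inv_add_left hω ha, ← intervalIntegral.integral_const_mul,
    ← intervalIntegral.integral_add hint hinv]
  congr 1 with x
  ring

lemma abs_integral_sub_div_add_le {f : ℝ → ℝ} {a ω C : ℝ} (ha : 0 ≤ a) (hω : 0 < ω)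
    (hC : ∀ x ∈ Icc 0 a, |f x - f 0| ≤ C * x) :
    |∫ x in (0 : ℝ)..a, (f x - f 0) / (ω + x)| ≤ C * a := by
  have := intervalIntegral.norm_integral_le_of_norm_le_const
    (f := fun x => (f x - f 0) / (ω + x)) (C := C) fun x hx => by
      rw [uIoc_of_le ha] at hx
      have hpos : 0 < ω + x := by linarith [hx.1]
      have hCx := hC x ⟨hx.1.le, hx.2⟩
      have hC0 : 0 ≤ C := nonneg_of_mul_nonneg_left ((abs_nonneg _).trans hCx) hx.1
      rw [Real.norm_eq_abs, abs_div, abs_of_pos hpos, div_le_iff₀ hpos]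
      nlinarith
  rwa [Real.norm_eq_abs, sub_zero, abs_of_nonneg ha] at this

lemma tendsto_neg_log_nhdsGT_zero : Tendsto (fun ω => -Real.log ω) (𝓝[>] 0) atTop :=
  tendsto_neg_atBot_atTop.comp Real.tendsto_log_nhdsGT_zero

lemma tendsto_div_atTop_of_isBoundedUnder {ι : Type*} {l : Filter ι} {u g : ι → ℝ}
    (hu : IsBoundedUnder (· ≤ ·) l fun i => |u i|) (hg : Tendsto g l atTop) :
    Tendsto (fun i => u i / g i) l (𝓝 0) := by
  simpa only [div_eq_inv_mul, Function.comp_apply] using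
    (tendsto_inv_atTop_zero.comp hg).zero_mul_isBoundedUnder_le hu

theorem tendsto_integral_div_add_div_neg_log {f : ℝ → ℝ} {a : ℝ} (ha : 0 < a)
    (hf : ContinuousOn f (Icc 0 a)) (hf0 : DifferentiableAt ℝ f 0) :
    Tendsto (fun ω => (∫ x in (0 : ℝ)..a, f x / (ω + x)) / -Real.log ω) (𝓝[>] 0) (𝓝 (f 0)) := by
  obtain ⟨C, hC⟩ := exists_abs_sub_le_mul_of_differentiableAt hf hf0
  have hpos : ∀ᶠ ω in 𝓝[>] (0 : ℝ), 0 < ω := self_mem_nhdsWithin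
  have hrem : Tendsto (fun ω => (∫ x in (0 : ℝ)..a, (f x - f 0) / (ω + x)) / -Real.log ω)
      (𝓝[>] 0) (𝓝 0) :=
    tendsto_div_atTop_of_isBoundedUnder (isBoundedUnder_of_eventually_le (a := C * a)
      (hpos.mono fun ω hω => abs_integral_sub_div_add_le ha.le hω hC)) tendsto_neg_log_nhdsGT_zero
  have hlog : Tendsto (fun ω => Real.log (ω + a) / -Real.log ω) (𝓝[>] 0) (𝓝 0) := by
    have : Tendsto (fun ω => Real.log (ω + a)) (𝓝[>] 0) (𝓝 (Real.log (0 + a))) :=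
      ((Real.continuousAt_log (by linarith)).comp (continuous_add_const a).continuousAt).tendsto
        |>.mono_left nhdsWithin_le_nhds
    exact this.div_atTop tendsto_neg_log_nhdsGT_zero
  have hlim := (hrem.add (hlog.const_mul (f 0))).add_const (f 0)
  rw [mul_zero, add_zero, zero_add] at hlim
  refine hlim.congr' ?_
  filter_upwards [Ioo_mem_nhdsGT one_pos] with ω hω
  have hlogω : Real.log ω ≠ 0 := (Real.log_neg hω.1 hω.2).ne
  rw [integral_div_add_eq ha.le hω.1 hf]
  field_simp
  ring

/-- For `f` with entire complex extension and `a > 0`,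
`(∫_0^a f(x)/(ω+x) dx)/(−ln ω) → f(0)` as `ω → 0⁺` within `(0, a)`. -/
theorem stmt_13 (f : ℝ → ℝ) (F : ℂ → ℂ)
    (hF : Differentiable ℂ F) (hFf : ∀ x : ℝ, F x = f x)
    (a : ℝ) (ha : 0 < a) :
    Tendsto (fun ω : ℝ => (∫ x in (0 : ℝ)..a, f x / (ω + x)) / (-Real.log ω))
      (nhdsWithin 0 (Set.Ioo 0 a)) (nhds (f 0)) := by
  have hre : f = fun x : ℝ => (F x).re := funext fun x => by simp [hFf]
  have hf : Differentiable ℝ f := fun x => by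
    rw [hre]
    exact (hF x).hasDerivAt.real_of_complex.differentiableAt
  exact (tendsto_integral_div_add_div_neg_log ha hf.continuous.continuousOn (hf 0)).mono_left
    (nhdsWithin_mono _ Ioo_subset_Ioi_self)
end

section
/- Let g : ℝ → ℝ admit an entire complex extension with g(0) = d_0, let n ≥ 1 be an integer, a > 0, and set f(x) = x^{n-1} g(x). Then the limit as ω → 0⁺ of (∫_0^a f(x)/(ω + x)^n dx)/(-ln ω) exists and equals d_0; that is, when f has a zero of order n−1 at the origin, ∫_0^a f(x)/(ω + x)^n dx ~ -d_0 ln ω as ω → 0⁺. -/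
/-!
With `t = x / (ω + x)` the integrand is `t ^ (n - 1) * g x / (ω + x)`. Since `g x - d₀ = O(x)` on
`[0, a]` and, by Bernoulli's inequality, `1 - t ^ (n - 1) ≤ (n - 1) ω / (ω + x)`, it differs from
`d₀ / (ω + x)` by at most `C + |d₀| (n - 1) ω / (ω + x) ^ 2`, whose integral over `[0, a]` is at
most `C a + |d₀| (n - 1)` for every `ω > 0`. Hence the integral is
`d₀ (log (ω + a) - log ω) + O(1) = -d₀ log ω + O(1)`.
-/

open Filter MeasureTheory Set Real Asymptotics Topology

lemma differentiable_of_complex_extension {G : ℂ → ℂ} {g : ℝ → ℝ}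
    (hG : Differentiable ℂ G) (hGg : ∀ x : ℝ, G x = g x) : Differentiable ℝ g := by
  have hg : g = fun x : ℝ => (G x).re := funext fun x => by rw [hGg, Complex.ofReal_re]
  rw [hg]
  exact fun x => (hG x).hasDerivAt.real_of_complex.differentiableAt

lemma Differentiable.exists_abs_sub_le_mul_abs_sub {g : ℝ → ℝ} (hg : Differentiable ℝ g)
    {K : Set ℝ} (hK : IsCompact K) (b : ℝ) :
    ∃ C, 0 ≤ C ∧ ∀ x ∈ K, |g x - g b| ≤ C * |x - b| := by
  have hslope : Continuous (dslope g b) :=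
    continuousOn_univ.1 <| (continuousOn_dslope univ_mem).2 ⟨hg.continuous.continuousOn, hg b⟩
  obtain ⟨C, hC⟩ := hK.exists_bound_of_continuousOn hslope.continuousOn
  refine ⟨max C 0, le_max_right _ _, fun x hx => ?_⟩
  rw [← sub_smul_dslope, smul_eq_mul, abs_mul, mul_comm]
  exact mul_le_mul_of_nonneg_right ((hC x hx).trans (le_max_left _ _)) (abs_nonneg _)

lemma integral_inv_add {ω a : ℝ} (hω : 0 < ω) (ha : 0 ≤ a) :
    ∫ x in (0 : ℝ)..a, (ω + x)⁻¹ = log (ω + a) - log ω := by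
  rw [intervalIntegral.integral_comp_add_left (fun x => x⁻¹), add_zero,
    integral_inv_of_pos hω (by linarith), log_div (by linarith) hω.ne']

lemma integral_div_add_sq {ω a : ℝ} (hω : 0 < ω) (ha : 0 ≤ a) :
    ∫ x in (0 : ℝ)..a, ω / (ω + x) ^ 2 = 1 - ω / (ω + a) := by
  have hpos : ∀ x ∈ uIcc 0 a, 0 < ω + x := fun x hx => by
    rw [uIcc_of_le ha] at hx; linarith [hx.1]
  have hderiv : ∀ x ∈ uIcc 0 a, HasDerivAt (fun x => -ω * (ω + x)⁻¹) (ω / (ω + x) ^ 2) x :=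
    fun x hx => ((((hasDerivAt_id x).const_add ω).fun_inv (hpos x hx).ne').const_mul
      (-ω)).congr_deriv (by simp only [id]; ring)
  have hcont : ContinuousOn (fun x => ω / (ω + x) ^ 2) (uIcc 0 a) :=
    continuousOn_const.div (by fun_prop) fun x hx => (pow_pos (hpos x hx) 2).ne'
  rw [intervalIntegral.integral_eq_sub_of_hasDerivAt hderiv hcont.intervalIntegrable]
  field_simp
  ring

lemma abs_pow_mul_div_sub_div_le {ω x y d C : ℝ} (m : ℕ) (hω : 0 < ω) (hx : 0 ≤ x)
    (hC : 0 ≤ C) (hy : |y - d| ≤ C * x) :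
    |x ^ m * y / (ω + x) ^ (m + 1) - d / (ω + x)| ≤ C + |d| * m * (ω / (ω + x) ^ 2) := by
  have hs : 0 < ω + x := by linarith
  obtain ⟨t, ht⟩ : ∃ t, t = x / (ω + x) := ⟨_, rfl⟩
  have ht0 : 0 ≤ t := ht ▸ by positivity
  have htm1 : t ^ m ≤ 1 := pow_le_one₀ ht0 (ht ▸ div_le_one_of_le₀ (by linarith) hs.le)
  have hsub : 1 - t = ω / (ω + x) := by rw [ht]; field_simp; ring
  have hbernoulli : 1 - t ^ m ≤ m * (ω / (ω + x)) := by
    have := one_add_mul_le_pow (a := -(1 - t)) (by linarith) m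
    rw [show 1 + -(1 - t) = t by ring] at this
    rw [← hsub]
    linarith
  have heq : x ^ m * y / (ω + x) ^ (m + 1) - d / (ω + x) =
      (t ^ m * (y - d) - d * (1 - t ^ m)) / (ω + x) := by
    rw [ht, div_pow]; field_simp; ring
  rw [heq, abs_div, abs_of_pos hs, div_le_iff₀ hs]
  calc |t ^ m * (y - d) - d * (1 - t ^ m)|
      ≤ t ^ m * |y - d| + |d| * (1 - t ^ m) := by
        refine (abs_sub _ _).trans_eq ?_
        rw [abs_mul, abs_mul, abs_of_nonneg (pow_nonneg ht0 m),
          abs_of_nonneg (sub_nonneg.2 htm1)]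
    _ ≤ 1 * (C * (ω + x)) + |d| * (m * (ω / (ω + x))) := by
        gcongr
        exact hy.trans (by gcongr; linarith)
    _ = (C + |d| * m * (ω / (ω + x) ^ 2)) * (ω + x) := by field_simp

lemma abs_integral_pow_mul_div_sub_log_le {g : ℝ → ℝ} {ω a d C : ℝ} (m : ℕ) (hω : 0 < ω)
    (ha : 0 ≤ a) (hg : ContinuousOn g (Icc 0 a)) (hC : 0 ≤ C)
    (hgd : ∀ x ∈ Icc 0 a, |g x - d| ≤ C * x) :
    |(∫ x in (0 : ℝ)..a, x ^ m * g x / (ω + x) ^ (m + 1)) - d * (log (ω + a) - log ω)| ≤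
      C * a + |d| * m := by
  have hpos : ∀ x ∈ uIcc 0 a, 0 < ω + x := fun x hx => by
    rw [uIcc_of_le ha] at hx; linarith [hx.1]
  have hf : IntervalIntegrable (fun x => x ^ m * g x / (ω + x) ^ (m + 1)) volume 0 a := by
    refine ContinuousOn.intervalIntegrable (ContinuousOn.div ?_ (by fun_prop)
      fun x hx => (pow_pos (hpos x hx) _).ne')
    exact (continuousOn_pow m).mul (uIcc_of_le ha ▸ hg)
  have hinv : IntervalIntegrable (fun x => d / (ω + x)) volume 0 a :=
    ContinuousOn.intervalIntegrable
      (continuousOn_const.div (by fun_prop) fun x hx => (hpos x hx).ne')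
  have hsq : IntervalIntegrable (fun x => ω / (ω + x) ^ 2) volume 0 a :=
    ContinuousOn.intervalIntegrable
      (continuousOn_const.div (by fun_prop) fun x hx => (pow_pos (hpos x hx) 2).ne')
  have hrem : 0 ≤ |d| * m * (ω / (ω + a)) :=
    mul_nonneg (by positivity) (div_nonneg hω.le (by linarith))
  calc |(∫ x in (0 : ℝ)..a, x ^ m * g x / (ω + x) ^ (m + 1)) - d * (log (ω + a) - log ω)|
      = |∫ x in (0 : ℝ)..a, (x ^ m * g x / (ω + x) ^ (m + 1) - d / (ω + x))| := by
        rw [intervalIntegral.integral_sub hf hinv]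
        simp only [div_eq_mul_inv d, intervalIntegral.integral_const_mul, integral_inv_add hω ha]
    _ ≤ ∫ x in (0 : ℝ)..a, |x ^ m * g x / (ω + x) ^ (m + 1) - d / (ω + x)| :=
        intervalIntegral.abs_integral_le_integral_abs ha
    _ ≤ ∫ x in (0 : ℝ)..a, (C + |d| * m * (ω / (ω + x) ^ 2)) :=
        intervalIntegral.integral_mono_on ha (hf.sub hinv).abs
          (intervalIntegrable_const.add (hsq.const_mul _))
          fun x hx => abs_pow_mul_div_sub_div_le m hω hx.1 hC (hgd x hx)
    _ = C * a + |d| * m * (1 - ω / (ω + a)) := by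
        rw [intervalIntegral.integral_add intervalIntegrable_const (hsq.const_mul _),
          intervalIntegral.integral_const, intervalIntegral.integral_const_mul,
          integral_div_add_sq hω ha, smul_eq_mul, sub_zero, mul_comm a]
    _ ≤ C * a + |d| * m := by linarith [mul_sub (|d| * m) 1 (ω / (ω + a))]

lemma tendsto_div_neg_log_of_isBigO {u : ℝ → ℝ} {d : ℝ}
    (hu : (fun ω => u ω + d * log ω) =O[𝓝[>] 0] (fun _ => (1 : ℝ))) :
    Tendsto (fun ω => u ω / -log ω) (𝓝[>] 0) (𝓝 d) := by
  have hlog : Tendsto (fun ω => -log ω) (𝓝[>] 0) atTop :=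
    tendsto_neg_atBot_atTop.comp tendsto_log_nhdsGT_zero
  rw [← tendsto_sub_nhds_zero_iff]
  refine ((hu.mul (isBigO_refl (fun ω => (-log ω)⁻¹) _)).trans_tendsto ?_).congr' ?_
  · simp only [one_mul]
    exact hlog.inv_tendsto_atTop
  · filter_upwards [hlog.eventually_ne_atTop 0] with ω hω
    rw [neg_ne_zero] at hω
    field_simp
    ring

/-- For `g` with entire complex extension, `n ≥ 1`, `a > 0` and `f(x) = x^{n-1} g(x)`,
`(∫_0^a f(x)/(ω+x)^n dx)/(−ln ω) → g(0)` as `ω → 0⁺` within `(0, a)`. -/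
theorem stmt_14 (g : ℝ → ℝ) (G : ℂ → ℂ)
    (hG : Differentiable ℂ G) (hGg : ∀ x : ℝ, G x = g x)
    (d₀ : ℝ) (hd₀ : g 0 = d₀)
    (n : ℕ) (hn : 1 ≤ n) (a : ℝ) (ha : 0 < a) :
    Tendsto
      (fun ω : ℝ =>
        (∫ x in (0 : ℝ)..a, x ^ (n - 1) * g x / (ω + x) ^ n) / (-Real.log ω))
      (nhdsWithin 0 (Set.Ioo 0 a)) (nhds d₀) := by
  obtain ⟨m, rfl⟩ : ∃ m, n = m + 1 := ⟨n - 1, by omega⟩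
  subst hd₀
  simp only [Nat.add_sub_cancel]
  have hg := differentiable_of_complex_extension hG hGg
  obtain ⟨C, hC, hgC⟩ := hg.exists_abs_sub_le_mul_abs_sub (isCompact_Icc (a := 0) (b := a)) 0
  have hdev : (fun ω => (∫ x in (0 : ℝ)..a, x ^ m * g x / (ω + x) ^ (m + 1)) -
      g 0 * (log (ω + a) - log ω)) =O[𝓝[>] 0] (fun _ => (1 : ℝ)) := by
    refine IsBigO.of_bound (C * a + |g 0| * m) (eventually_mem_nhdsWithin.mono fun ω hω => ?_)
    rw [norm_one, mul_one, Real.norm_eq_abs]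
    refine abs_integral_pow_mul_div_sub_log_le m hω ha.le hg.continuous.continuousOn hC
      fun x hx => ?_
    simpa [abs_of_nonneg hx.1] using hgC x hx
  have hloga : (fun ω => log (ω + a)) =O[𝓝[>] 0] (fun _ => (1 : ℝ)) :=
    ((((continuous_add_const a).tendsto 0).log (by simpa using ha.ne')).mono_left
      nhdsWithin_le_nhds).isBigO_one ℝ
  have hsum : (fun ω => (∫ x in (0 : ℝ)..a, x ^ m * g x / (ω + x) ^ (m + 1)) + g 0 * log ω)
      =O[𝓝[>] 0] (fun _ => (1 : ℝ)) :=
    (hdev.add (hloga.const_mul_left (g 0))).congr_left fun ω => by ring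
  exact (tendsto_div_neg_log_of_isBigO hsum).mono_left (nhdsWithin_mono _ Ioo_subset_Ioi_self)
end

section
/- Let g : ℝ → ℝ admit an entire complex extension with g(0) = d_0, let n ≥ 2 and 2 ≤ s ≤ n be integers, a > 0, and set f(x) = x^{n-s} g(x). Then the limit as ω → 0⁺ of ω^{s-1} ∫_0^a f(x)/(ω + x)^n dx exists and equals d_0 Σ_{k=0}^{n-s} (-1)^{n-s-k} (n-s)!/(k! (n-1-k) (n-s-k)!); that is, when f has a zero of order n−s at the origin, ∫_0^a f(x)/(ω + x)^n dx ~ d_0 ω^{-(s-1)} Σ_{k=0}^{n-s} (-1)^{n-s-k} (n-s)!/(k! (n-1-k) (n-s-k)!) as ω → 0⁺. -/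
/-!
Split `g = g 0 + (g - g 0)`. For the constant part, expanding `x ^ m = ((ω + x) - ω) ^ m`
binomially makes the integral explicit: after multiplying by `ω ^ (n - m - 1)` each term is
`C(m, k) (-1) ^ (m - k) (1 - (ω / (ω + a)) ^ (n - 1 - k)) / (n - 1 - k)`, which tends to
`C(m, k) (-1) ^ (m - k) / (n - 1 - k)`. The remainder is `O(x)` because `g` is Lipschitz on
`[0, a]` (it is the restriction of an entire function), and `ω ^ (n - m - 1) x ^ (m + 1)` is at
most `(ω + x) ^ n`, so dominated convergence sends its contribution to `0`.
-/

open Filter MeasureTheory Set Topology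

theorem integral_one_div_add_pow_succ {ω a : ℝ} (hω : 0 < ω) (ha : 0 ≤ a) {j : ℕ}
    (hj : j ≠ 0) :
    ∫ x in (0 : ℝ)..a, 1 / (ω + x) ^ (j + 1) = (1 - (ω / (ω + a)) ^ j) / (j * ω ^ j) := by
  have hpos : ∀ x ∈ uIcc 0 a, 0 < ω + x := fun x hx => by
    rw [uIcc_of_le ha] at hx; linarith [hx.1]
  have hderiv : ∀ x ∈ uIcc 0 a, HasDerivAt (fun y => -((ω + y) ^ j)⁻¹ / j)
      (1 / (ω + x) ^ (j + 1)) x := by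
    intro x hx
    have hx := hpos x hx
    refine ((((hasDerivAt_id' x).const_add ω).fun_pow j).fun_inv
      (pow_ne_zero _ hx.ne')).fun_neg.div_const (j : ℝ) |>.congr_deriv ?_
    obtain ⟨i, rfl⟩ := Nat.exists_eq_add_one_of_ne_zero hj
    field_simp
    simp only [add_tsub_cancel_right]
    ring
  have hint : IntervalIntegrable (fun x => 1 / (ω + x) ^ (j + 1)) volume 0 a :=
    ContinuousOn.intervalIntegrable <| ContinuousOn.div (by fun_prop) (by fun_prop)
      fun x hx => pow_ne_zero _ (hpos x hx).ne'
  rw [intervalIntegral.integral_eq_sub_of_hasDerivAt hderiv hint, div_pow]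
  have : 0 < ω + a := by linarith
  field_simp
  ring

theorem pow_mul_integral_pow_div_add_pow {ω a : ℝ} (hω : 0 < ω) (ha : 0 ≤ a) {m n : ℕ}
    (hmn : m + 2 ≤ n) :
    ω ^ (n - m - 1) * ∫ x in (0 : ℝ)..a, x ^ m / (ω + x) ^ n =
      ∑ k ∈ Finset.range (m + 1), (m.choose k : ℝ) * (-1) ^ (m - k) *
        (1 - (ω / (ω + a)) ^ (n - 1 - k)) / (n - 1 - k : ℕ) := by
  have hpos : ∀ x ∈ uIcc 0 a, 0 < ω + x := fun x hx => by
    rw [uIcc_of_le ha] at hx; linarith [hx.1]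
  have hexpand : ∀ x ∈ uIcc 0 a, x ^ m / (ω + x) ^ n = ∑ k ∈ Finset.range (m + 1),
      (m.choose k : ℝ) * (-ω) ^ (m - k) * (1 / (ω + x) ^ (n - 1 - k + 1)) := by
    intro x hx
    have hx := (hpos x hx).ne'
    have hbin : x ^ m =
        ∑ k ∈ Finset.range (m + 1), (ω + x) ^ k * (-ω) ^ (m - k) * m.choose k := by
      rw [← add_pow]; ring
    rw [hbin, Finset.sum_div]
    refine Finset.sum_congr rfl fun k hk => ?_
    have hk := Finset.mem_range.1 hk
    have hsplit : (ω + x) ^ n = (ω + x) ^ k * (ω + x) ^ (n - 1 - k + 1) := by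
      rw [← pow_add]; congr 1; omega
    rw [hsplit]
    field_simp
  rw [intervalIntegral.integral_congr fun x hx => hexpand x hx,
    intervalIntegral.integral_finsetSum, Finset.mul_sum]
  · refine Finset.sum_congr rfl fun k hk => ?_
    have hk := Finset.mem_range.1 hk
    rw [intervalIntegral.integral_const_mul, integral_one_div_add_pow_succ hω ha (by omega)]
    have : ω ^ (n - m - 1) * ω ^ (m - k) = ω ^ (n - 1 - k) := by rw [← pow_add]; congr 1; omega
    rw [neg_pow]
    field_simp
    rw [← this]
    ring
  · intro k hk
    exact (ContinuousOn.intervalIntegrable <| ContinuousOn.div (by fun_prop) (by fun_prop)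
      fun x hx => pow_ne_zero _ (hpos x hx).ne').const_mul _

theorem tendsto_pow_mul_integral_pow_div_add_pow {a : ℝ} (ha : 0 < a) {m n : ℕ}
    (hmn : m + 2 ≤ n) :
    Tendsto (fun ω => ω ^ (n - m - 1) * ∫ x in (0 : ℝ)..a, x ^ m / (ω + x) ^ n) (𝓝[>] 0)
      (𝓝 (∑ k ∈ Finset.range (m + 1),
        (m.choose k : ℝ) * (-1) ^ (m - k) / (n - 1 - k : ℕ))) := by
  have hcont : ContinuousAt (fun ω => ∑ k ∈ Finset.range (m + 1),
      (m.choose k : ℝ) * (-1) ^ (m - k) * (1 - (ω / (ω + a)) ^ (n - 1 - k)) / (n - 1 - k : ℕ))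
      0 := by
    fun_prop (disch := simp [ha.ne'])
  convert (hcont.tendsto.mono_left nhdsWithin_le_nhds).congr' ?_ using 2
  · refine Finset.sum_congr rfl fun k hk => ?_
    have hk := Finset.mem_range.1 hk
    simp [zero_pow (by omega : n - 1 - k ≠ 0)]
  · filter_upwards [self_mem_nhdsWithin] with ω hω
    exact (pow_mul_integral_pow_div_add_pow hω ha.le hmn).symm

theorem pow_mul_pow_le_add_pow {ω x : ℝ} (hω : 0 ≤ ω) (hx : 0 ≤ x) (p q : ℕ) :
    ω ^ p * x ^ q ≤ (ω + x) ^ (p + q) := by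
  rw [pow_add]
  gcongr <;> linarith

theorem tendsto_pow_mul_integral_pow_mul_sub_div_add_pow {g : ℝ → ℝ} {K : NNReal} {a : ℝ}
    (ha : 0 ≤ a) (hg : LipschitzOnWith K g (Icc 0 a)) {m n : ℕ} (hmn : m + 2 ≤ n) :
    Tendsto (fun ω => ω ^ (n - m - 1) * ∫ x in (0 : ℝ)..a, x ^ m * (g x - g 0) / (ω + x) ^ n)
      (𝓝[>] 0) (𝓝 0) := by
  set F : ℝ → ℝ → ℝ := fun ω x => ω ^ (n - m - 1) * (x ^ m * (g x - g 0) / (ω + x) ^ n)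
  have hF : ∀ ω, ω ^ (n - m - 1) * ∫ x in (0 : ℝ)..a, x ^ m * (g x - g 0) / (ω + x) ^ n =
      ∫ x in Ioc 0 a, F ω x := fun ω => by
    rw [intervalIntegral.integral_of_le ha, ← integral_const_mul]
  simp only [hF]
  have hlim := tendsto_integral_filter_of_dominated_convergence
    (μ := volume.restrict (Ioc 0 a)) (l := 𝓝[>] 0) (F := F) (f := fun _ => 0)
    (fun _ => (K : ℝ)) ?_ ?_ (integrable_const _) ?_
  · simpa using hlim
  · filter_upwards [self_mem_nhdsWithin] with ω (hω : 0 < ω)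
    refine ContinuousOn.aestronglyMeasurable ?_ measurableSet_Ioc
    have hgc : ContinuousOn g (Ioc 0 a) := hg.continuousOn.mono Ioc_subset_Icc_self
    exact continuousOn_const.mul <| ContinuousOn.div (by fun_prop) (by fun_prop)
      fun x hx => pow_ne_zero _ (by linarith [hx.1])
  · filter_upwards [self_mem_nhdsWithin] with ω (hω : 0 < ω)
    refine (ae_restrict_iff' measurableSet_Ioc).2 <| ae_of_all _ fun x ⟨hx, hxa⟩ => ?_
    have hgx : |g x - g 0| ≤ K * x := by
      simpa [Real.dist_eq, abs_of_pos hx] using hg.dist_le_mul x ⟨hx.le, hxa⟩ 0 ⟨le_rfl, ha⟩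
    have hωx : 0 < ω + x := by linarith
    calc ‖F ω x‖ = ω ^ (n - m - 1) * x ^ m * |g x - g 0| / (ω + x) ^ n := by
          simp only [F, Real.norm_eq_abs, abs_mul, abs_div, abs_pow, abs_of_pos hω,
            abs_of_pos hx, abs_of_pos hωx]
          ring
      _ ≤ ω ^ (n - m - 1) * x ^ m * (K * x) / (ω + x) ^ n := by gcongr
      _ = K * (ω ^ (n - m - 1) * x ^ (m + 1) / (ω + x) ^ n) := by ring
      _ ≤ K := by
          refine mul_le_of_le_one_right K.2 ((div_le_one (by positivity)).2 ?_)
          exact (pow_mul_pow_le_add_pow hω.le hx.le _ _).trans_eq (by congr 1; omega)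
  · refine (ae_restrict_iff' measurableSet_Ioc).2 <| ae_of_all _ fun x ⟨hx, _⟩ => ?_
    have hcont : ContinuousAt (F · x) 0 := by
      fun_prop (disch := positivity)
    convert hcont.tendsto.mono_left nhdsWithin_le_nhds
    simp [F, zero_pow (by omega : n - m - 1 ≠ 0)]

theorem tendsto_pow_mul_integral_pow_mul_div_add_pow {g : ℝ → ℝ} {K : NNReal} {a : ℝ}
    (ha : 0 < a) (hg : LipschitzOnWith K g (Icc 0 a)) {m n : ℕ} (hmn : m + 2 ≤ n) :
    Tendsto (fun ω => ω ^ (n - m - 1) * ∫ x in (0 : ℝ)..a, x ^ m * g x / (ω + x) ^ n)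
      (𝓝[>] 0) (𝓝 (g 0 * ∑ k ∈ Finset.range (m + 1),
        (m.choose k : ℝ) * (-1) ^ (m - k) / (n - 1 - k : ℕ))) := by
  have hlim := ((tendsto_pow_mul_integral_pow_div_add_pow ha hmn).const_mul (g 0)).add
    (tendsto_pow_mul_integral_pow_mul_sub_div_add_pow ha.le hg hmn)
  rw [add_zero] at hlim
  refine hlim.congr' ?_
  filter_upwards [self_mem_nhdsWithin] with ω (hω : 0 < ω)
  have hgc : ContinuousOn g (uIcc 0 a) := by rw [uIcc_of_le ha.le]; exact hg.continuousOn
  have hden : ∀ x ∈ uIcc 0 a, (ω + x) ^ n ≠ 0 := fun x hx => by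
    rw [uIcc_of_le ha.le] at hx; exact pow_ne_zero _ (by linarith [hx.1])
  have hsplit : ∫ x in (0 : ℝ)..a, x ^ m * g x / (ω + x) ^ n =
      g 0 * (∫ x in (0 : ℝ)..a, x ^ m / (ω + x) ^ n) +
        ∫ x in (0 : ℝ)..a, x ^ m * (g x - g 0) / (ω + x) ^ n := by
    rw [← intervalIntegral.integral_const_mul, ← intervalIntegral.integral_add]
    · exact intervalIntegral.integral_congr fun x _ => by ring
    · exact (ContinuousOn.intervalIntegrable (by fun_prop (disch := exact hden))).const_mul _
    · exact ContinuousOn.intervalIntegrable (by fun_prop (disch := exact hden))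
  rw [hsplit]
  ring

theorem Differentiable.contDiff_of_ofReal_eq {G : ℂ → ℂ} (hG : Differentiable ℂ G)
    {g : ℝ → ℝ}
    (hGg : ∀ x : ℝ, G x = g x) {n : WithTop ℕ∞} : ContDiff ℝ n g := by
  have : g = fun x : ℝ => (G x).re := funext fun x => by simp [hGg]
  rw [this]
  exact Complex.reCLM.contDiff.comp
    ((hG.contDiff.restrict_scalars ℝ).comp Complex.ofRealCLM.contDiff)

theorem stmt_15_general (g : ℝ → ℝ) (G : ℂ → ℂ)
    (hG : Differentiable ℂ G) (hGg : ∀ x : ℝ, G x = g x)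
    (d₀ : ℝ) (hd₀ : g 0 = d₀)
    (n s : ℕ) (hs : 2 ≤ s) (hsn : s ≤ n) (a : ℝ) (ha : 0 < a) :
    Tendsto
      (fun ω : ℝ =>
        ω ^ (s - 1) * ∫ x in (0 : ℝ)..a, x ^ (n - s) * g x / (ω + x) ^ n)
      (nhdsWithin 0 (Set.Ioo 0 a))
      (nhds (d₀ * ∑ k ∈ Finset.range (n - s + 1),
        (-1 : ℝ) ^ (n - s - k) * (Nat.factorial (n - s) : ℝ) /
          ((Nat.factorial k : ℝ) * ((n - 1 - k : ℕ) : ℝ) *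
            (Nat.factorial (n - s - k) : ℝ)))) := by
  obtain ⟨K, hK⟩ := (hG.contDiff_of_ofReal_eq hGg (n := 1)).contDiffOn.exists_lipschitzOnWith
    one_ne_zero (convex_Icc 0 a) isCompact_Icc
  have hlim := tendsto_pow_mul_integral_pow_mul_div_add_pow ha hK (by omega : n - s + 2 ≤ n)
  rw [show n - (n - s) - 1 = s - 1 by omega, hd₀] at hlim
  convert hlim.mono_left (nhdsWithin_mono _ Ioo_subset_Ioi_self) using 3
  refine Finset.sum_congr rfl fun k hk => ?_
  rw [Nat.cast_choose ℝ (Nat.le_of_lt_succ (Finset.mem_range.1 hk))]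
  field_simp

/-- For `g` with entire complex extension, `n ≥ 2`, `2 ≤ s ≤ n`, `a > 0` and
`f(x) = x^{n-s} g(x)`, `ω^{s-1} ∫_0^a f(x)/(ω+x)^n dx` tends, as `ω → 0⁺` within `(0,a)`,
to `g(0) Σ_{k=0}^{n-s} (-1)^{n-s-k}(n-s)!/(k!(n-1-k)(n-s-k)!)`. -/
theorem stmt_15 (g : ℝ → ℝ) (G : ℂ → ℂ)
    (hG : Differentiable ℂ G) (hGg : ∀ x : ℝ, G x = g x)
    (d₀ : ℝ) (hd₀ : g 0 = d₀)
    (n s : ℕ) (hn : 2 ≤ n) (hs : 2 ≤ s) (hsn : s ≤ n) (a : ℝ) (ha : 0 < a) :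
    Tendsto
      (fun ω : ℝ =>
        ω ^ (s - 1) * ∫ x in (0 : ℝ)..a, x ^ (n - s) * g x / (ω + x) ^ n)
      (nhdsWithin 0 (Set.Ioo 0 a))
      (nhds (d₀ * ∑ k ∈ Finset.range (n - s + 1),
        (-1 : ℝ) ^ (n - s - k) * (Nat.factorial (n - s) : ℝ) /
          ((Nat.factorial k : ℝ) * ((n - 1 - k : ℕ) : ℝ) *
            (Nat.factorial (n - s - k) : ℝ)))) :=
  stmt_15_general g G hG hGg d₀ hd₀ n s hs hsn a ha
end
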